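/- arXiv:1904.04343 — 6 statements merged into one kernel-verified Lean document; each statement's English description precedes it below -/
import Mathlib

section
/- Let R be a Lie conformal algebra and let φ be a conformal biderivation of R. Define Φ_{λ,μ,γ}(x,y;u,v) = [(φ_μ(x,y))_{μ+γ} [u_λ v]] - [[x_μ y]_{μ+γ} φ_λ(u,v)]. Then Φ satisfies the symmetry Φ_{λ,μ,γ}(x,y;u,v) = Φ_{μ,λ,γ}(u,y;x,v) and the antisymmetry Φ_{λ,μ,γ}(x,y;u,v) = -Φ_{λ,γ,μ}(y,x;u,v). -/
/- Framework: a Lie conformal algebra over ℂ is a ℂ[∂]-module `R` (given by a ℂ-module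
with a ℂ-linear operator `D` for the action of `∂`) with a λ-bracket `B : R → R → R[λ]`.
We model `R[λ]` as `ℕ →₀ R` (coefficient of `λ^n` at index `n`) and `R[λ,μ,γ]` as an
iterated Finsupp.  Substitutions of the bracket variable are implemented by evaluating
the polynomial at a commuting operator (e.g. multiplication by `λ`, by `λ+μ`, or by
`-∂-λ`), and brackets/biderivations are extended to polynomial-valued arguments by
ℂ[λ,μ,γ]-bilinearity. -/

namespace ConfBider

variable {R : Type} [AddCommGroup R] [Module ℂ R]

/-- `R[λ]`. -/
abbrev Pol1 (R : Type) [AddCommGroup R] : Type := ℕ →₀ R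

/-- `R[λ,μ,γ]`: index `a` is the exponent of `λ`, then `μ`, then `γ`. -/
abbrev Pol3 (R : Type) [AddCommGroup R] : Type := ℕ →₀ (ℕ →₀ (ℕ →₀ R))

/-- Multiplication by the variable on `R[λ]`. -/
noncomputable def shift1 : Pol1 R → Pol1 R := Finsupp.mapDomain (· + 1)

/-- The action of `∂` on coefficients of `R[λ]`. -/
noncomputable def D1 (D : R →ₗ[ℂ] R) : Pol1 R → Pol1 R := Finsupp.mapRange D (map_zero D)

/-- The operator "multiplication by `-∂-λ`" on `R[λ]`. -/
noncomputable def subNeg (D : R →ₗ[ℂ] R) : Pol1 R → Pol1 R := fun z => -(D1 D z) - shift1 z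

/-- Evaluation of `f ∈ R[ν]` at the operator `e` (substitution `ν ↦ e`), inside `R[λ]`. -/
noncomputable def ev1 (f : Pol1 R) (e : Pol1 R → Pol1 R) : Pol1 R :=
  f.sum fun n r => e^[n] (Finsupp.single 0 r)

/-- Constants `R → R[λ,μ,γ]`. -/
noncomputable def iota3 : R → Pol3 R := fun r => Finsupp.single 0 (Finsupp.single 0 (Finsupp.single 0 r))

/-- Multiplication by `λ` on `R[λ,μ,γ]`. -/
noncomputable def Xl : Pol3 R → Pol3 R := Finsupp.mapDomain (· + 1)

/-- Multiplication by `μ` on `R[λ,μ,γ]`. -/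
noncomputable def Xm : Pol3 R → Pol3 R :=
  Finsupp.mapRange (Finsupp.mapDomain (· + 1)) Finsupp.mapDomain_zero

/-- Multiplication by `γ` on `R[λ,μ,γ]`. -/
noncomputable def Xg : Pol3 R → Pol3 R :=
  Finsupp.mapRange (Finsupp.mapRange (Finsupp.mapDomain (· + 1)) Finsupp.mapDomain_zero)
    Finsupp.mapRange_zero

/-- Multiplication by `λ+μ` on `R[λ,μ,γ]`. -/
noncomputable def eLM : Pol3 R → Pol3 R := fun z => Xl z + Xm z

/-- Multiplication by `μ+γ` on `R[λ,μ,γ]`. -/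
noncomputable def eMG : Pol3 R → Pol3 R := fun z => Xm z + Xg z

/-- Evaluation of `f ∈ R[ν]` at the operator `e` (substitution `ν ↦ e`), in `R[λ,μ,γ]`. -/
noncomputable def ev (f : Pol1 R) (e : Pol3 R → Pol3 R) : Pol3 R := f.sum fun n r => e^[n] (iota3 r)

/-- Extension of an `R`-argument operation `F` to a polynomial argument in `R[λ,μ,γ]`,
by ℂ[λ,μ,γ]-linearity. -/
noncomputable def lift3 (F : R → Pol3 R) : Pol3 R → Pol3 R := fun w =>
  w.sum fun a fa => fa.sum fun b fb => fb.sum fun c r => Xl^[a] (Xm^[b] (Xg^[c] (F r)))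

/-- `φ : R × R → R[λ]` is a conformal bilinear map: ℂ-bilinear with
`φ_λ(∂x,y) = -λ φ_λ(x,y)` and `φ_λ(x,∂y) = (∂+λ) φ_λ(x,y)`. -/
structure IsConfBilinear (D : R →ₗ[ℂ] R) (φ : R → R → Pol1 R) : Prop where
  add_left : ∀ x x' y, φ (x + x') y = φ x y + φ x' y
  add_right : ∀ x y y', φ x (y + y') = φ x y + φ x y'
  smul_left : ∀ (c : ℂ) x y, φ (c • x) y = c • φ x y
  smul_right : ∀ (c : ℂ) x y, φ x (c • y) = c • φ x y
  d_left : ∀ x y, φ (D x) y = -(shift1 (φ x y))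
  d_right : ∀ x y, φ x (D y) = D1 D (φ x y) + shift1 (φ x y)

/-- Skew-symmetry `φ_λ(x,y) = -φ_{-∂-λ}(y,x)`. -/
noncomputable def IsSkew (D : R →ₗ[ℂ] R) (φ : R → R → Pol1 R) : Prop :=
  ∀ x y, φ x y = -(ev1 (φ y x) (subNeg D))

/-- A Lie conformal algebra structure: conformal sesquilinearity, skew-symmetry and
the Jacobi identity `[x_λ[y_μ z]] = [[x_λ y]_{λ+μ} z] + [y_μ[x_λ z]]`. -/
structure IsLieConformal (D : R →ₗ[ℂ] R) (B : R → R → Pol1 R) : Prop where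
  bilin : IsConfBilinear D B
  skew : IsSkew D B
  jacobi : ∀ x y z,
    lift3 (fun r => ev (B x r) Xl) (ev (B y z) Xm)
      = lift3 (fun r => ev (B r z) eLM) (ev (B x y) Xl)
        + lift3 (fun r => ev (B y r) Xm) (ev (B x z) Xl)

/-- A conformal biderivation of a Lie conformal algebra `(R, D, B)`: a skew-symmetric
conformal bilinear map `φ` with `φ_λ(x,[y_μ z]) = [(φ_λ(x,y))_{λ+μ} z] + [y_μ φ_λ(x,z)]`. -/
structure IsConfBiderivation (D : R →ₗ[ℂ] R) (B : R → R → Pol1 R)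
    (φ : R → R → Pol1 R) : Prop where
  bilin : IsConfBilinear D φ
  skew : IsSkew D φ
  leibniz : ∀ x y z,
    lift3 (fun r => ev (φ x r) Xl) (ev (B y z) Xm)
      = lift3 (fun r => ev (B r z) eLM) (ev (φ x y) Xl)
        + lift3 (fun r => ev (B y r) Xm) (ev (φ x z) Xl)


/-- `Φ_{e₁,e₂,e₃}(x,y;u,v) = [(φ_{e₂}(x,y))_{e₂+e₃}[u_{e₁} v]] - [[x_{e₂} y]_{e₂+e₃} φ_{e₁}(u,v)]`,
where `e₁, e₂, e₃` are the (commuting multiplication) operators playing the roles of the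
formal variables `λ, μ, γ`. -/
noncomputable def Phi {R : Type} [AddCommGroup R] [Module ℂ R]
    (B φ : R → R → Pol1 R) (e1 e2 e3 : Pol3 R → Pol3 R) (x y u v : R) : Pol3 R :=
  lift3 (fun r => lift3 (fun s => ev (B r s) (fun z => e2 z + e3 z)) (ev (B u v) e1))
      (ev (φ x y) e2)
    - lift3 (fun r => lift3 (fun s => ev (B r s) (fun z => e2 z + e3 z)) (ev (φ u v) e1))
        (ev (B x y) e2)

set_option linter.unusedSectionVars false

noncomputable instance : AddCommGroup (Pol3 R) := inferInstance
noncomputable instance : Ring (AddMonoid.End (Pol3 R)) := AddMonoid.End.instRing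

noncomputable def ih : R →+ Pol3 R :=
  ((Finsupp.singleAddHom 0).comp (Finsupp.singleAddHom 0)).comp (Finsupp.singleAddHom 0)

lemma ih_apply (r : R) : ih r = iota3 (R := R) r := rfl

noncomputable def xl : AddMonoid.End (Pol3 R) := Finsupp.mapDomain.addMonoidHom (· + 1)
noncomputable def xm : AddMonoid.End (Pol3 R) :=
  Finsupp.mapRange.addMonoidHom (Finsupp.mapDomain.addMonoidHom (· + 1))
noncomputable def xg : AddMonoid.End (Pol3 R) :=
  Finsupp.mapRange.addMonoidHom
    (Finsupp.mapRange.addMonoidHom (Finsupp.mapDomain.addMonoidHom (· + 1)))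
lemma End_add_apply (f g : AddMonoid.End (Pol3 R)) (x : Pol3 R) : (f + g) x = f x + g x := rfl
lemma End_sub_apply (f g : AddMonoid.End (Pol3 R)) (x : Pol3 R) : (f - g) x = f x - g x := rfl
lemma End_neg_apply (f : AddMonoid.End (Pol3 R)) (x : Pol3 R) : (-f) x = -(f x) := rfl

noncomputable def dd (D : R →ₗ[ℂ] R) : AddMonoid.End (Pol3 R) :=
  Finsupp.mapRange.addMonoidHom
    (Finsupp.mapRange.addMonoidHom (Finsupp.mapRange.addMonoidHom D.toAddMonoidHom))

lemma coe_xl : ⇑(xl (R := R)) = Xl := rfl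
lemma coe_xm : ⇑(xm (R := R)) = Xm := rfl
lemma coe_xg : ⇑(xg (R := R)) = Xg := rfl

lemma pow_apply (f : AddMonoid.End (Pol3 R)) (n : ℕ) (z : Pol3 R) : (f ^ n) z = (⇑f)^[n] z := rfl



lemma commute_of_forall {M : Type} [AddCommMonoid M] {x y : AddMonoid.End M}
    (h : ∀ w, x (y w) = y (x w)) : Commute x y := AddMonoidHom.ext h

lemma mapRR_comm {α M : Type} [AddCommMonoid M] (f g : M →+ M)
    (h : ∀ v, f (g v) = g (f v)) (w : α →₀ M) :
    Finsupp.mapRange.addMonoidHom f (Finsupp.mapRange.addMonoidHom g w)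
      = Finsupp.mapRange.addMonoidHom g (Finsupp.mapRange.addMonoidHom f w) := by
  ext a
  simp [Finsupp.mapRange.addMonoidHom, h]

lemma mapDR_comm {α M : Type} [AddCommMonoid M] (f : α → α) (g : M →+ M) (w : α →₀ M) :
    Finsupp.mapDomain.addMonoidHom f (Finsupp.mapRange.addMonoidHom g w)
      = Finsupp.mapRange.addMonoidHom g (Finsupp.mapDomain.addMonoidHom f w) := by
  show Finsupp.mapDomain f (Finsupp.mapRange g (map_zero g) w)
      = Finsupp.mapRange g (map_zero g) (Finsupp.mapDomain f w)
  exact Finsupp.mapDomain_mapRange f w g (map_zero g) (map_add g)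

lemma commute_xl_xm : Commute (xl (R := R)) xm :=
  commute_of_forall fun w => (mapDR_comm _ _ w)

lemma commute_xl_xg : Commute (xl (R := R)) xg :=
  commute_of_forall fun w => (mapDR_comm _ _ w)

lemma commute_xm_xg : Commute (xm (R := R)) xg :=
  commute_of_forall fun w => mapRR_comm _ _ (fun v => mapDR_comm _ _ v) w

lemma commute_dd_xl (D : R →ₗ[ℂ] R) : Commute (dd D) (xl (R := R)) :=
  (commute_of_forall fun w => (mapDR_comm _ _ w)).symm

lemma commute_dd_xm (D : R →ₗ[ℂ] R) : Commute (dd D) (xm (R := R)) :=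
  commute_of_forall fun w => mapRR_comm _ _ (fun v => (mapDR_comm _ _ v).symm) w

lemma commute_dd_xg (D : R →ₗ[ℂ] R) : Commute (dd D) (xg (R := R)) :=
  commute_of_forall fun w =>
    mapRR_comm _ _ (fun v => mapRR_comm _ _ (fun u => (mapDR_comm _ _ u).symm) v) w

lemma dd_iota (D : R →ₗ[ℂ] R) (r : R) : dd D (iota3 r) = iota3 (D r) := by
  show Finsupp.mapRange.addMonoidHom _ _ = _
  rw [show (iota3 r : Pol3 R) = Finsupp.single 0 (Finsupp.single 0 (Finsupp.single 0 r)) from rfl]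
  simp [Finsupp.mapRange.addMonoidHom_apply, Finsupp.mapRange_single, iota3]

/-! ### evaluation and operator-lift -/

noncomputable def ev3 (f : Pol1 R) (e : AddMonoid.End (Pol3 R)) : Pol3 R :=
  f.sum fun n r => (e ^ n) (iota3 r)

noncomputable def oL (p : AddMonoid.End (Pol3 R)) (F : R →+ Pol3 R) (f : Pol1 R) : Pol3 R :=
  f.sum fun n r => (p ^ n) (F r)

lemma ev3_eq_oL (f : Pol1 R) (e : AddMonoid.End (Pol3 R)) : ev3 f e = oL e ih f := rfl

lemma oL_single (p : AddMonoid.End (Pol3 R)) (F : R →+ Pol3 R) (n : ℕ) (r : R) :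
    oL p F (Finsupp.single n r) = (p ^ n) (F r) :=
  Finsupp.sum_single_index (by simp)

lemma oL_zero (p : AddMonoid.End (Pol3 R)) (F : R →+ Pol3 R) : oL p F 0 = 0 :=
  Finsupp.sum_zero_index

lemma oL_add_f (p : AddMonoid.End (Pol3 R)) (F : R →+ Pol3 R) (f g : Pol1 R) :
    oL p F (f + g) = oL p F f + oL p F g :=
  Finsupp.sum_add_index' (fun _ => by simp) (fun _ _ _ => by rw [map_add, map_add])

noncomputable def oLh (p : AddMonoid.End (Pol3 R)) (F : R →+ Pol3 R) : Pol1 R →+ Pol3 R :=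
  AddMonoidHom.mk' (oL p F) (oL_add_f p F)

lemma oL_neg_f (p : AddMonoid.End (Pol3 R)) (F : R →+ Pol3 R) (f : Pol1 R) :
    oL p F (-f) = -(oL p F f) :=
  map_neg (oLh p F) f

lemma oL_congr {p : AddMonoid.End (Pol3 R)} {F G : R →+ Pol3 R} (h : ∀ r, F r = G r)
    (f : Pol1 R) : oL p F f = oL p G f := by
  unfold oL; exact Finsupp.sum_congr fun n _ => by rw [h]

lemma oL_Fadd (p : AddMonoid.End (Pol3 R)) (F G : R →+ Pol3 R) (f : Pol1 R) :
    oL p (F + G) f = oL p F f + oL p G f := by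
  unfold oL
  rw [← Finsupp.sum_add]
  exact Finsupp.sum_congr fun n _ => by simp

lemma oL_Fneg (p : AddMonoid.End (Pol3 R)) (F : R →+ Pol3 R) (f : Pol1 R) :
    oL p (-F) f = -(oL p F f) := by
  unfold oL
  rw [← Finsupp.sum_neg]
  exact Finsupp.sum_congr fun n _ => by simp

lemma oL_pull {p q : AddMonoid.End (Pol3 R)} (hq : Commute p q) (F : R →+ Pol3 R)
    (f : Pol1 R) : oL p ((q : Pol3 R →+ Pol3 R).comp F) f = q (oL p F f) := by
  unfold oL
  rw [map_finsuppSum]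
  exact Finsupp.sum_congr fun n _ => by
    exact DFunLike.congr_fun (hq.pow_left n).eq _

lemma oL_shift (p : AddMonoid.End (Pol3 R)) (F : R →+ Pol3 R) (f : Pol1 R) :
    oL p F (shift1 f) = p (oL p F f) := by
  unfold oL shift1
  rw [Finsupp.sum_mapDomain_index_inj (fun a b h => by omega), map_finsuppSum]
  exact Finsupp.sum_congr fun n _ => by rw [pow_succ']; rfl

lemma oL_D1 (D : R →ₗ[ℂ] R) (p : AddMonoid.End (Pol3 R)) (F : R →+ Pol3 R) (f : Pol1 R) :
    oL p F (D1 D f) = oL p (F.comp D.toAddMonoidHom) f := by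
  unfold oL D1
  rw [Finsupp.sum_mapRange_index (fun _ => by simp)]
  rfl

lemma oL_subNeg {p q : AddMonoid.End (Pol3 R)} (D : R →ₗ[ℂ] R) (F : R →+ Pol3 R)
    (hF : ∀ r, F (D r) = q (F r)) (hpq : Commute p q) (z : Pol1 R) :
    oL p F (subNeg D z) = (-q - p) (oL p F z) := by
  have h1 : oL p F (D1 D z) = q (oL p F z) := by
    rw [oL_D1]
    rw [show (F.comp D.toAddMonoidHom) = (q : Pol3 R →+ Pol3 R).comp F from
      AddMonoidHom.ext fun r => hF r]
    exact oL_pull hpq F z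
  have h2 : oL p F (subNeg D z) = -(oL p F (D1 D z)) - oL p F (shift1 z) := by
    show oLh p F _ = _
    rw [show subNeg D z = -(D1 D z) - shift1 z from rfl, map_sub, map_neg]
    rfl
  rw [h2, h1, oL_shift, End_sub_apply, End_neg_apply]

lemma oL_ev1_subNeg {p q : AddMonoid.End (Pol3 R)} (D : R →ₗ[ℂ] R) (F : R →+ Pol3 R)
    (hF : ∀ r, F (D r) = q (F r)) (hpq : Commute p q) (f : Pol1 R) :
    oL p F (ev1 f (subNeg D)) = oL (-q - p) F f := by
  have key : ∀ (n : ℕ) (r : R),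
      oL p F ((subNeg D)^[n] (Finsupp.single 0 r)) = ((-q - p) ^ n) (F r) := by
    intro n
    induction n with
    | zero => intro r; simpa using oL_single p F 0 r
    | succ k ih2 =>
        intro r
        rw [Function.iterate_succ_apply', pow_succ']
        show oL p F (subNeg D _) = _
        rw [oL_subNeg D F hF hpq, ih2]
        rfl
  unfold ev1
  show oLh p F _ = _
  rw [map_finsuppSum (oLh p F)]
  show _ = oL (-q-p) F f
  unfold oL
  exact Finsupp.sum_congr fun n _ => key n (f n)

/-! ### triple operator lift -/

noncomputable def lE3 (p1 p2 p3 : AddMonoid.End (Pol3 R)) (F : R →+ Pol3 R) (w : Pol3 R) :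
    Pol3 R :=
  w.sum fun a fa => fa.sum fun b fb => fb.sum fun c r => (p1 ^ a) ((p2 ^ b) ((p3 ^ c) (F r)))

lemma lE3_single (p1 p2 p3 : AddMonoid.End (Pol3 R)) (F : R →+ Pol3 R) (a b c : ℕ) (r : R) :
    lE3 p1 p2 p3 F (Finsupp.single a (Finsupp.single b (Finsupp.single c r)))
      = (p1 ^ a) ((p2 ^ b) ((p3 ^ c) (F r))) := by
  unfold lE3
  rw [Finsupp.sum_single_index (by exact Finsupp.sum_zero_index),
    Finsupp.sum_single_index (by exact Finsupp.sum_zero_index),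
    Finsupp.sum_single_index (by simp)]

lemma lE3_add (p1 p2 p3 : AddMonoid.End (Pol3 R)) (F : R →+ Pol3 R) (w₁ w₂ : Pol3 R) :
    lE3 p1 p2 p3 F (w₁ + w₂) = lE3 p1 p2 p3 F w₁ + lE3 p1 p2 p3 F w₂ := by
  unfold lE3
  refine Finsupp.sum_add_index' (fun a => Finsupp.sum_zero_index) (fun a m₁ m₂ => ?_)
  refine Finsupp.sum_add_index' (fun b => Finsupp.sum_zero_index) (fun b n₁ n₂ => ?_)
  exact Finsupp.sum_add_index' (fun c => by simp) (fun c r₁ r₂ => by simp)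

noncomputable def lE3h (p1 p2 p3 : AddMonoid.End (Pol3 R)) (F : R →+ Pol3 R) :
    AddMonoid.End (Pol3 R) :=
  AddMonoidHom.mk' (lE3 p1 p2 p3 F) (lE3_add p1 p2 p3 F)

lemma lE3_iota (p1 p2 p3 : AddMonoid.End (Pol3 R)) (F : R →+ Pol3 R) (r : R) :
    lE3 p1 p2 p3 F (iota3 r) = F r := by
  show lE3 p1 p2 p3 F (Finsupp.single 0 (Finsupp.single 0 (Finsupp.single 0 r))) = F r
  rw [lE3_single]
  simp

lemma lE3_Xl (p1 p2 p3 : AddMonoid.End (Pol3 R)) (F : R →+ Pol3 R) (w : Pol3 R) :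
    lE3 p1 p2 p3 F (Xl w) = p1 (lE3 p1 p2 p3 F w) := by
  unfold lE3 Xl
  rw [Finsupp.sum_mapDomain_index_inj (fun a b h => by omega), map_finsuppSum]
  refine Finsupp.sum_congr fun a _ => ?_
  rw [map_finsuppSum]
  refine Finsupp.sum_congr fun b _ => ?_
  rw [map_finsuppSum]
  refine Finsupp.sum_congr fun c _ => ?_
  rw [pow_succ']
  rfl

lemma lE3_Xm (p1 p2 p3 : AddMonoid.End (Pol3 R)) (F : R →+ Pol3 R) (h12 : Commute p1 p2)
    (w : Pol3 R) : lE3 p1 p2 p3 F (Xm w) = p2 (lE3 p1 p2 p3 F w) := by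
  unfold lE3 Xm
  have h0 : ∀ (a : ℕ), ((0 : ℕ →₀ (ℕ →₀ R)).sum fun b fb =>
      fb.sum fun c r => (p1 ^ a) ((p2 ^ b) ((p3 ^ c) (F r)))) = 0 := fun a => Finsupp.sum_zero_index
  rw [Finsupp.sum_mapRange_index h0, map_finsuppSum]
  refine Finsupp.sum_congr fun a fa => ?_
  rw [Finsupp.sum_mapDomain_index_inj (fun x y h => by omega), map_finsuppSum]
  refine Finsupp.sum_congr fun b _ => ?_
  rw [map_finsuppSum]
  refine Finsupp.sum_congr fun c _ => ?_
  rw [pow_succ']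
  show (p1 ^ a) ((p2 * p2 ^ b) _) = p2 ((p1 ^ a) _)
  rw [show ((p2 * p2 ^ b) : AddMonoid.End (Pol3 R)) ((p3 ^ c) (F ((w a) b c)))
      = p2 ((p2 ^ b) ((p3 ^ c) (F ((w a) b c)))) from rfl]
  exact DFunLike.congr_fun ((h12.pow_left a).eq) _

lemma lE3_Xg (p1 p2 p3 : AddMonoid.End (Pol3 R)) (F : R →+ Pol3 R) (h13 : Commute p1 p3)
    (h23 : Commute p2 p3) (w : Pol3 R) :
    lE3 p1 p2 p3 F (Xg w) = p3 (lE3 p1 p2 p3 F w) := by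
  unfold lE3 Xg
  have h0 : ∀ (a : ℕ), ((0 : ℕ →₀ (ℕ →₀ R)).sum fun b fb =>
      fb.sum fun c r => (p1 ^ a) ((p2 ^ b) ((p3 ^ c) (F r)))) = 0 := fun a => Finsupp.sum_zero_index
  rw [Finsupp.sum_mapRange_index h0, map_finsuppSum]
  refine Finsupp.sum_congr fun a fa => ?_
  have h0' : ∀ (b : ℕ), ((0 : ℕ →₀ R).sum fun c r => (p1 ^ a) ((p2 ^ b) ((p3 ^ c) (F r)))) = 0 :=
    fun b => Finsupp.sum_zero_index
  rw [Finsupp.sum_mapRange_index h0', map_finsuppSum]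
  refine Finsupp.sum_congr fun b fb => ?_
  rw [Finsupp.sum_mapDomain_index_inj (fun x y h => by omega), map_finsuppSum]
  refine Finsupp.sum_congr fun c _ => ?_
  rw [pow_succ']
  have e1 : ((p2 ^ b) ((p3 * p3 ^ c) (F (((w a) b) c)))) = p3 ((p2 ^ b) ((p3 ^ c) (F (((w a) b) c)))) :=
    DFunLike.congr_fun ((h23.pow_left b).eq) _
  have e2 : (p1 ^ a) (p3 ((p2 ^ b) ((p3 ^ c) (F (((w a) b) c))))) = p3 ((p1 ^ a) ((p2 ^ b) ((p3 ^ c) (F (((w a) b) c))))) :=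
    DFunLike.congr_fun ((h13.pow_left a).eq) _
  rw [show ((p3 * p3 ^ c) : AddMonoid.End (Pol3 R)) (F (((w a) b) c)) = p3 ((p3 ^ c) (F (((w a) b) c))) from rfl] at *
  rw [show (p2 ^ b) (p3 ((p3 ^ c) (F (((w a) b) c)))) = p3 ((p2^b) ((p3 ^ c) (F (((w a) b) c)))) from e1]
  exact e2

/-! ### canonical form and extension principle -/

lemma xl_single (a : ℕ) (m : ℕ →₀ ℕ →₀ R) :
    xl (Finsupp.single a m) = Finsupp.single (a+1) m := by
  show Xl _ = _
  simp [Xl, Finsupp.mapDomain_single]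

lemma xm_single (a : ℕ) (m : ℕ →₀ ℕ →₀ R) :
    xm (Finsupp.single a m) = Finsupp.single a (Finsupp.mapDomain (· + 1) m) := by
  show Xm _ = _
  simp [Xm, Finsupp.mapRange_single]

lemma xg_single (a : ℕ) (m : ℕ →₀ ℕ →₀ R) :
    xg (Finsupp.single a m)
      = Finsupp.single a (Finsupp.mapRange (Finsupp.mapDomain (· + 1)) Finsupp.mapDomain_zero m) := by
  show Xg _ = _
  simp [Xg, Finsupp.mapRange_single]

lemma xg_pow_iota (c : ℕ) (r : R) :
    (xg ^ c) (iota3 r) = Finsupp.single 0 (Finsupp.single 0 (Finsupp.single c r)) := by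
  induction c with
  | zero => rfl
  | succ k ih2 =>
      rw [pow_succ']
      show xg ((xg ^ k) (iota3 r)) = _
      rw [ih2, xg_single]
      simp [Finsupp.mapRange_single, Finsupp.mapDomain_single]

lemma xm_pow_single (b : ℕ) (m : ℕ →₀ R) :
    (xm ^ b) (Finsupp.single 0 (Finsupp.single 0 m))
      = Finsupp.single 0 (Finsupp.single b m) := by
  induction b with
  | zero => rfl
  | succ k ih2 =>
      rw [pow_succ']
      show xm ((xm ^ k) _) = _
      rw [ih2, xm_single]
      simp [Finsupp.mapDomain_single]

lemma xl_pow_single (a : ℕ) (m : ℕ →₀ ℕ →₀ R) :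
    (xl ^ a) (Finsupp.single 0 m) = Finsupp.single a m := by
  induction a with
  | zero => rfl
  | succ k ih2 =>
      rw [pow_succ]
      show (xl ^ k) (xl _) = _
      rw [xl_single, show (0:ℕ) + 1 = 1 from rfl]
      -- now need (xl ^ k) (single 1 m) = single (k+1) m
      clear ih2
      induction k with
      | zero => rfl
      | succ j ih3 =>
          rw [pow_succ']
          show xl ((xl ^ j) _) = _
          rw [ih3, xl_single]

lemma mono_eq (a b c : ℕ) (r : R) :
    (xl ^ a) ((xm ^ b) ((xg ^ c) (iota3 r)))
      = Finsupp.single a (Finsupp.single b (Finsupp.single c r)) := by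
  rw [xg_pow_iota, xm_pow_single, xl_pow_single]

lemma lE3_canonical (w : Pol3 R) : lE3 xl xm xg ih w = w := by
  unfold lE3
  have h3 : ∀ (A B : ℕ) (fb : ℕ →₀ R),
      (fb.sum fun c r => Finsupp.single A (Finsupp.single B (Finsupp.single c r)))
        = Finsupp.single A (Finsupp.single B fb) := by
    intro A B fb
    have := (map_finsuppSum ((Finsupp.singleAddHom A).comp
      (Finsupp.singleAddHom (M := ℕ →₀ R) B)) fb Finsupp.single).symm
    simpa [Finsupp.sum_single] using this
  calc (w.sum fun a fa => fa.sum fun b fb => fb.sum fun c r =>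
          (xl ^ a) ((xm ^ b) ((xg ^ c) (ih r))))
      = w.sum fun a fa => fa.sum fun b fb => Finsupp.single a (Finsupp.single b fb) := by
        refine Finsupp.sum_congr fun a _ => Finsupp.sum_congr fun b _ => ?_
        rw [← h3 a b ((w a) b)]
        exact Finsupp.sum_congr fun c r => mono_eq a b c (w a b c)
    _ = w.sum fun a fa => Finsupp.single a fa := by
        refine Finsupp.sum_congr fun a _ => ?_
        have := (map_finsuppSum (Finsupp.singleAddHom (M := ℕ →₀ ℕ →₀ R) a) (w a) Finsupp.single).symm
        simpa [Finsupp.sum_single] using this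
    _ = w := Finsupp.sum_single w

lemma end_ext {T1 T2 : AddMonoid.End (Pol3 R)}
    (c1l : Commute T1 xl) (c1m : Commute T1 xm) (c1g : Commute T1 xg)
    (c2l : Commute T2 xl) (c2m : Commute T2 xm) (c2g : Commute T2 xg)
    (hι : ∀ r : R, T1 (iota3 r) = T2 (iota3 r)) (w : Pol3 R) : T1 w = T2 w := by
  have key : ∀ (T : AddMonoid.End (Pol3 R)), Commute T xl → Commute T xm → Commute T xg →
      T w = w.sum fun a fa => fa.sum fun b fb => fb.sum fun c r =>
        (xl ^ a) ((xm ^ b) ((xg ^ c) (T (iota3 r)))) := by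
    intro T hl hm hg
    conv_lhs => rw [← lE3_canonical w]
    unfold lE3
    rw [map_finsuppSum]
    refine Finsupp.sum_congr fun a fa => ?_
    rw [map_finsuppSum]
    refine Finsupp.sum_congr fun b fb => ?_
    rw [map_finsuppSum]
    refine Finsupp.sum_congr fun c r => ?_
    have e1 : T ((xl ^ a) ((xm ^ b) ((xg ^ c) (ih (w a b c)))))
        = (xl ^ a) (T ((xm ^ b) ((xg ^ c) (ih (w a b c))))) :=
      DFunLike.congr_fun ((hl.pow_right a).eq) _
    have e2 : T ((xm ^ b) ((xg ^ c) (ih (w a b c))))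
        = (xm ^ b) (T ((xg ^ c) (ih (w a b c)))) :=
      DFunLike.congr_fun ((hm.pow_right b).eq) _
    have e3 : T ((xg ^ c) (ih (w a b c))) = (xg ^ c) (T (ih (w a b c))) :=
      DFunLike.congr_fun ((hg.pow_right c).eq) _
    rw [e1, e2, e3]
    rfl
  rw [key T1 c1l c1m c1g, key T2 c2l c2m c2g]
  refine Finsupp.sum_congr fun a fa => Finsupp.sum_congr fun b fb => Finsupp.sum_congr fun c r => ?_
  rw [hι]

/-! ### value-level extension operators -/

noncomputable def lEE (G : R →+ Pol3 R) : AddMonoid.End (Pol3 R) := lE3h xl xm xg G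

lemma lEE_iota (G : R →+ Pol3 R) (r : R) : lEE G (iota3 r) = G r := lE3_iota _ _ _ _ _

lemma commute_lEE_xl (G : R →+ Pol3 R) : Commute (lEE G) xl :=
  commute_of_forall fun w => lE3_Xl xl xm xg G w

lemma commute_lEE_xm (G : R →+ Pol3 R) : Commute (lEE G) xm :=
  commute_of_forall fun w => lE3_Xm xl xm xg G commute_xl_xm w

lemma commute_lEE_xg (G : R →+ Pol3 R) : Commute (lEE G) xg :=
  commute_of_forall fun w => lE3_Xg xl xm xg G commute_xl_xg commute_xm_xg w

lemma lEE_oL {p : AddMonoid.End (Pol3 R)} (G : R →+ Pol3 R) (hp : Commute p (lEE G))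
    (F : R →+ Pol3 R) (f : Pol1 R) :
    lEE G (oL p F f) = oL p (((lEE G : AddMonoid.End (Pol3 R)) : Pol3 R →+ Pol3 R).comp F) f :=
  (oL_pull hp F f).symm

lemma lEE_ev3 {e : AddMonoid.End (Pol3 R)} (G : R →+ Pol3 R) (hp : Commute e (lEE G))
    (f : Pol1 R) : lEE G (ev3 f e) = oL e G f := by
  rw [ev3_eq_oL, lEE_oL G hp ih f]
  exact oL_congr (fun r => lEE_iota G r) f

/-! ### transport of the axioms to general operator pairs -/

lemma ev3_add_f (f g : Pol1 R) (e : AddMonoid.End (Pol3 R)) :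
    ev3 (f + g) e = ev3 f e + ev3 g e := by
  rw [ev3_eq_oL, ev3_eq_oL, ev3_eq_oL]; exact oL_add_f e ih f g

noncomputable def KH (g : R → Pol1 R) (hg : ∀ a b, g (a + b) = g a + g b)
    (e : AddMonoid.End (Pol3 R)) : R →+ Pol3 R :=
  AddMonoidHom.mk' (fun r => ev3 (g r) e) (fun a b => by
    show ev3 (g (a + b)) e = ev3 (g a) e + ev3 (g b) e
    rw [hg]; exact ev3_add_f _ _ e)

@[simp] lemma KH_apply (g : R → Pol1 R) (hg : ∀ a b, g (a + b) = g a + g b)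
    (e : AddMonoid.End (Pol3 R)) (r : R) : KH g hg e r = ev3 (g r) e := rfl

lemma Xl_iter_add (a : ℕ) (y z : Pol3 R) : Xl^[a] (y + z) = Xl^[a] y + Xl^[a] z :=
  map_add (xl ^ a) y z
lemma Xm_iter_add (a : ℕ) (y z : Pol3 R) : Xm^[a] (y + z) = Xm^[a] y + Xm^[a] z :=
  map_add (xm ^ a) y z
lemma Xg_iter_add (a : ℕ) (y z : Pol3 R) : Xg^[a] (y + z) = Xg^[a] y + Xg^[a] z :=
  map_add (xg ^ a) y z
lemma Xl_iter_zero (a : ℕ) : Xl^[a] (0 : Pol3 R) = 0 := map_zero (xl ^ a)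
lemma Xm_iter_zero (a : ℕ) : Xm^[a] (0 : Pol3 R) = 0 := map_zero (xm ^ a)
lemma Xg_iter_zero (a : ℕ) : Xg^[a] (0 : Pol3 R) = 0 := map_zero (xg ^ a)

section lift3lemmas

variable (Fp : R → Pol3 R)

lemma Fp_zero (hFp : ∀ r s, Fp (r + s) = Fp r + Fp s) : Fp 0 = 0 := by
  have := hFp 0 0
  simpa using this.symm

lemma lift3_add (hFp : ∀ r s, Fp (r + s) = Fp r + Fp s) (w₁ w₂ : Pol3 R) : lift3 Fp (w₁ + w₂) = lift3 Fp w₁ + lift3 Fp w₂ := by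
  unfold lift3
  refine Finsupp.sum_add_index' (fun a => Finsupp.sum_zero_index) (fun a m₁ m₂ => ?_)
  refine Finsupp.sum_add_index' (fun b => Finsupp.sum_zero_index) (fun b n₁ n₂ => ?_)
  refine Finsupp.sum_add_index' (fun c => ?_) (fun c r₁ r₂ => ?_)
  · rw [Fp_zero Fp hFp, Xg_iter_zero, Xm_iter_zero, Xl_iter_zero]
  · rw [hFp, Xg_iter_add, Xm_iter_add, Xl_iter_add]

lemma lift3_single (hFp : ∀ r s, Fp (r + s) = Fp r + Fp s) (a b c : ℕ) (r : R) :
    lift3 Fp (Finsupp.single a (Finsupp.single b (Finsupp.single c r)))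
      = Xl^[a] (Xm^[b] (Xg^[c] (Fp r))) := by
  unfold lift3
  rw [Finsupp.sum_single_index (by exact Finsupp.sum_zero_index),
    Finsupp.sum_single_index (by exact Finsupp.sum_zero_index),
    Finsupp.sum_single_index (by rw [Fp_zero Fp hFp, Xg_iter_zero, Xm_iter_zero, Xl_iter_zero])]

end lift3lemmas

lemma xm_pow_iota (n : ℕ) (s : R) :
    (xm ^ n) (iota3 s) = Finsupp.single 0 (Finsupp.single n (Finsupp.single 0 s)) :=
  xm_pow_single n (Finsupp.single 0 s)

lemma xl_pow_iota (n : ℕ) (s : R) :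
    (xl ^ n) (iota3 s) = Finsupp.single n (Finsupp.single 0 (Finsupp.single 0 s)) :=
  xl_pow_single n (Finsupp.single 0 (Finsupp.single 0 s))

section sigma

variable (p1 p2 : AddMonoid.End (Pol3 R))

noncomputable def sgm : AddMonoid.End (Pol3 R) := lE3h p1 p2 1 ih

lemma sgm_iota (r : R) : sgm p1 p2 (iota3 r) = iota3 r := lE3_iota _ _ _ _ r

lemma sgm_Xl (w : Pol3 R) : sgm p1 p2 (Xl w) = p1 (sgm p1 p2 w) := lE3_Xl _ _ _ _ w

lemma sgm_Xm (h12 : Commute p1 p2) (w : Pol3 R) :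
    sgm p1 p2 (Xm w) = p2 (sgm p1 p2 w) := lE3_Xm _ _ _ _ h12 w

lemma sgm_Xg (w : Pol3 R) : sgm p1 p2 (Xg w) = sgm p1 p2 w := by
  have := lE3_Xg p1 p2 1 ih (Commute.one_right p1) (Commute.one_right p2) w
  simp at this; exact this

lemma sgm_ev {e : Pol3 R → Pol3 R} {pe : AddMonoid.End (Pol3 R)}
    (he : ∀ z, sgm p1 p2 (e z) = pe (sgm p1 p2 z)) (f : Pol1 R) :
    sgm p1 p2 (ev f e) = ev3 f pe := by
  have key : ∀ (n : ℕ) (r : R), sgm p1 p2 (e^[n] (iota3 r)) = (pe ^ n) (iota3 r) := by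
    intro n
    induction n with
    | zero => intro r; simpa using sgm_iota p1 p2 r
    | succ k ih2 =>
        intro r
        rw [Function.iterate_succ_apply', he, ih2 r, pow_succ']
        rfl
  unfold ev ev3
  rw [map_finsuppSum]
  exact Finsupp.sum_congr fun n _ => key n (f n)

lemma sgm_evXl (f : Pol1 R) : sgm p1 p2 (ev f Xl) = ev3 f p1 :=
  sgm_ev p1 p2 (fun z => sgm_Xl p1 p2 z) f

lemma sgm_evXm (h12 : Commute p1 p2) (f : Pol1 R) : sgm p1 p2 (ev f Xm) = ev3 f p2 :=
  sgm_ev p1 p2 (fun z => sgm_Xm p1 p2 h12 z) f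

lemma sgm_evLM (h12 : Commute p1 p2) (f : Pol1 R) :
    sgm p1 p2 (ev f eLM) = ev3 f (p1 + p2) := by
  refine sgm_ev p1 p2 (fun z => ?_) f
  show sgm p1 p2 (Xl z + Xm z) = (p1 + p2) (sgm p1 p2 z)
  rw [map_add, sgm_Xl, sgm_Xm p1 p2 h12, End_add_apply]

lemma Xm_iter_pow (n : ℕ) (z : Pol3 R) : Xm^[n] z = (xm ^ n) z := rfl
lemma Xl_iter_pow (n : ℕ) (z : Pol3 R) : Xl^[n] z = (xl ^ n) z := rfl
lemma Xg_iter_pow (n : ℕ) (z : Pol3 R) : Xg^[n] z = (xg ^ n) z := rfl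

lemma sgm_Xm_iter (h12 : Commute p1 p2) (n : ℕ) (z : Pol3 R) :
    sgm p1 p2 (Xm^[n] z) = (p2 ^ n) (sgm p1 p2 z) := by
  induction n with
  | zero => rfl
  | succ k ih2 =>
      rw [Function.iterate_succ_apply', sgm_Xm p1 p2 h12, ih2, pow_succ']
      rfl

lemma sgm_Xl_iter (n : ℕ) (z : Pol3 R) :
    sgm p1 p2 (Xl^[n] z) = (p1 ^ n) (sgm p1 p2 z) := by
  induction n with
  | zero => rfl
  | succ k ih2 =>
      rw [Function.iterate_succ_apply', sgm_Xl, ih2, pow_succ']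
      rfl

lemma sgm_lift3_evXm (h12 : Commute p1 p2) (Fp : R → Pol3 R)
    (hFp : ∀ r s, Fp (r + s) = Fp r + Fp s) (g : Pol1 R) :
    sgm p1 p2 (lift3 Fp (ev g Xm)) = g.sum fun n s => (p2 ^ n) (sgm p1 p2 (Fp s)) := by
  have hmono : ∀ (n : ℕ) (s : R), lift3 Fp (Xm^[n] (iota3 s)) = Xm^[n] (Fp s) := by
    intro n s
    rw [Xm_iter_pow, xm_pow_iota, lift3_single Fp hFp]
    simp
  have hsum : ∀ w₁ w₂ : Pol3 R, sgm p1 p2 (lift3 Fp (w₁ + w₂))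
      = sgm p1 p2 (lift3 Fp w₁) + sgm p1 p2 (lift3 Fp w₂) := fun w₁ w₂ => by
    rw [lift3_add Fp hFp, map_add]
  unfold ev
  show (AddMonoidHom.mk' (fun w => sgm p1 p2 (lift3 Fp w)) hsum)
      (g.sum fun n r => Xm^[n] (iota3 r)) = _
  rw [map_finsuppSum]
  refine Finsupp.sum_congr fun n _ => ?_
  show sgm p1 p2 (lift3 Fp (Xm^[n] (iota3 (g n)))) = _
  rw [hmono n (g n), sgm_Xm_iter p1 p2 h12]

lemma sgm_lift3_evXl (Fp : R → Pol3 R)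
    (hFp : ∀ r s, Fp (r + s) = Fp r + Fp s) (g : Pol1 R) :
    sgm p1 p2 (lift3 Fp (ev g Xl)) = g.sum fun n s => (p1 ^ n) (sgm p1 p2 (Fp s)) := by
  have hmono : ∀ (n : ℕ) (s : R), lift3 Fp (Xl^[n] (iota3 s)) = Xl^[n] (Fp s) := by
    intro n s
    rw [Xl_iter_pow, xl_pow_iota, lift3_single Fp hFp]
    simp
  have hsum : ∀ w₁ w₂ : Pol3 R, sgm p1 p2 (lift3 Fp (w₁ + w₂))
      = sgm p1 p2 (lift3 Fp w₁) + sgm p1 p2 (lift3 Fp w₂) := fun w₁ w₂ => by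
    rw [lift3_add Fp hFp, map_add]
  unfold ev
  show (AddMonoidHom.mk' (fun w => sgm p1 p2 (lift3 Fp w)) hsum)
      (g.sum fun n r => Xl^[n] (iota3 r)) = _
  rw [map_finsuppSum]
  refine Finsupp.sum_congr fun n _ => ?_
  show sgm p1 p2 (lift3 Fp (Xl^[n] (iota3 (g n)))) = _
  rw [hmono n (g n), sgm_Xl_iter p1 p2]

end sigma

lemma ev_Xl_eq (f : Pol1 R) : ev f Xl = ev3 f xl := rfl
lemma ev_Xm_eq (f : Pol1 R) : ev f Xm = ev3 f xm := rfl
lemma ev_Xg_eq (f : Pol1 R) : ev f Xg = ev3 f xg := rfl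
lemma ev_eLM_eq (f : Pol1 R) : ev f eLM = ev3 f (xl + xm) := rfl
lemma ev_eMG_eq (f : Pol1 R) : ev f eMG = ev3 f (xm + xg) := rfl

/-- Transported Leibniz/Jacobi-type identity: from the `(Xl, Xm)` instance to an
arbitrary commuting pair of operators. -/
theorem transport (B ψ : R → R → Pol1 R)
    (hψr : ∀ x r s, ψ x (r + s) = ψ x r + ψ x s)
    (hBl : ∀ r s z, B (r + s) z = B r z + B s z)
    (hBr : ∀ y r s, B y (r + s) = B y r + B y s)
    (hid : ∀ x y z, lift3 (fun r => ev (ψ x r) Xl) (ev (B y z) Xm)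
      = lift3 (fun r => ev (B r z) eLM) (ev (ψ x y) Xl)
        + lift3 (fun r => ev (B y r) Xm) (ev (ψ x z) Xl))
    (p1 p2 : AddMonoid.End (Pol3 R)) (h12 : Commute p1 p2) (x y z : R) :
    oL p2 (KH (ψ x) (hψr x) p1) (B y z)
      = oL p1 (KH (fun r => B r z) (fun r s => hBl r s z) (p1 + p2)) (ψ x y)
        + oL p1 (KH (B y) (hBr y) p2) (ψ x z) := by
  have hF1 : ∀ r s : R, ev (ψ x (r + s)) Xl = ev (ψ x r) Xl + ev (ψ x s) Xl := fun r s => by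
    rw [hψr]; exact ev3_add_f _ _ xl
  have hF2 : ∀ r s : R, ev (B (r + s) z) eLM = ev (B r z) eLM + ev (B s z) eLM := fun r s => by
    rw [hBl]; exact ev3_add_f _ _ (xl (R := R) + xm)
  have hF3 : ∀ r s : R, ev (B y (r + s)) Xm = ev (B y r) Xm + ev (B y s) Xm := fun r s => by
    rw [hBr]; exact ev3_add_f _ _ xm
  have h := congrArg (sgm p1 p2) (hid x y z)
  rw [map_add] at h
  have e1 : sgm p1 p2 (lift3 (fun r => ev (ψ x r) Xl) (ev (B y z) Xm))
      = oL p2 (KH (ψ x) (hψr x) p1) (B y z) := by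
    rw [sgm_lift3_evXm p1 p2 h12 _ hF1]
    unfold oL
    refine Finsupp.sum_congr fun n _ => ?_
    rw [sgm_evXl]
    rfl
  have e2 : sgm p1 p2 (lift3 (fun r => ev (B r z) eLM) (ev (ψ x y) Xl))
      = oL p1 (KH (fun r => B r z) (fun r s => hBl r s z) (p1 + p2)) (ψ x y) := by
    rw [sgm_lift3_evXl p1 p2 _ hF2]
    unfold oL
    refine Finsupp.sum_congr fun n _ => ?_
    rw [sgm_evLM p1 p2 h12]
    rfl
  have e3 : sgm p1 p2 (lift3 (fun r => ev (B y r) Xm) (ev (ψ x z) Xl))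
      = oL p1 (KH (B y) (hBr y) p2) (ψ x z) := by
    rw [sgm_lift3_evXl p1 p2 _ hF3]
    unfold oL
    refine Finsupp.sum_congr fun n _ => ?_
    rw [sgm_evXm p1 p2 h12]
    rfl
  rw [e1, e2, e3] at h
  exact h

/-! ### skew-symmetry and sesquilinearity at the `ev3` level -/

lemma ev3_neg_f (f : Pol1 R) (e : AddMonoid.End (Pol3 R)) : ev3 (-f) e = -(ev3 f e) := by
  rw [ev3_eq_oL, ev3_eq_oL]; exact oL_neg_f e ih f

lemma ih_D (D : R →ₗ[ℂ] R) (r : R) : ih (D r) = dd D (ih r) := by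
  rw [ih_apply, ih_apply, dd_iota]

lemma ev3_shift1 (f : Pol1 R) (e : AddMonoid.End (Pol3 R)) : ev3 (shift1 f) e = e (ev3 f e) := by
  rw [ev3_eq_oL, ev3_eq_oL]; exact oL_shift e ih f

lemma ev3_D1 (D : R →ₗ[ℂ] R) {e : AddMonoid.End (Pol3 R)} (hde : Commute (dd D) e)
    (f : Pol1 R) : ev3 (D1 D f) e = dd D (ev3 f e) := by
  rw [ev3_eq_oL, ev3_eq_oL, oL_D1]
  rw [show (ih.comp D.toAddMonoidHom : R →+ Pol3 R)
      = ((dd D : AddMonoid.End (Pol3 R)) : Pol3 R →+ Pol3 R).comp ih from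
    AddMonoidHom.ext fun r => ih_D D r]
  exact oL_pull hde.symm ih f

lemma sk (D : R →ₗ[ℂ] R) (ψ : R → R → Pol1 R) (hsk : IsSkew D ψ)
    {e : AddMonoid.End (Pol3 R)} (hde : Commute (dd D) e) (x y : R) :
    ev3 (ψ x y) e = -(ev3 (ψ y x) (-(dd D) - e)) := by
  rw [hsk x y, ev3_neg_f, ev3_eq_oL, ev3_eq_oL]
  rw [oL_ev1_subNeg D ih (fun r => ih_D D r) hde.symm]

lemma Kd_right (D : R →ₗ[ℂ] R) (ψ : R → R → Pol1 R) (hψ : IsConfBilinear D ψ)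
    {e : AddMonoid.End (Pol3 R)} (hde : Commute (dd D) e) (x r : R) :
    ev3 (ψ x (D r)) e = (dd D + e) (ev3 (ψ x r) e) := by
  rw [hψ.d_right, ev3_add_f, ev3_D1 D hde, ev3_shift1, End_add_apply]

lemma Kd_left (D : R →ₗ[ℂ] R) (ψ : R → R → Pol1 R) (hψ : IsConfBilinear D ψ)
    (e : AddMonoid.End (Pol3 R)) (x r : R) :
    ev3 (ψ (D r) x) e = (-e) (ev3 (ψ r x) e) := by
  rw [hψ.d_left, ev3_neg_f, ev3_shift1]
  rfl

/-! ### first-slot Leibniz rule -/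

section FL

variable (D : R →ₗ[ℂ] R) (B φp : R → R → Pol1 R)
variable (hR : IsLieConformal D B) (hφ : IsConfBiderivation D B φp)

/-- `φ_n([x_a u], z) = -[u_{n-a} φ_a(x,z)] + [x_a φ_{n-a}(u,z)]` -/
theorem FL {n a : AddMonoid.End (Pol3 R)} (hdn : Commute (dd D) n) (hda : Commute (dd D) a)
    (hna : Commute n a) (x u z : R) :
    oL a (KH (fun r => φp r z) (fun r s => hφ.bilin.add_left r s z) n) (B x u)
      = -(oL a (KH (B u) (hR.bilin.add_right u) (n - a)) (φp x z))
        + oL (n - a) (KH (B x) (hR.bilin.add_right x) a) (φp u z) := by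
  set P : AddMonoid.End (Pol3 R) := -(dd D) - n with hP
  have hPa : Commute P a := (hda.neg_left).sub_left hna
  have hPdd : Commute P (dd D) := ((Commute.refl (dd D)).neg_left).sub_left hdn.symm
  have hdna : Commute (dd D) (n - a) := hdn.sub_right hda
  have hops : P + a = -(dd D) - (n - a) := by rw [hP]; abel
  -- Step 1: skew of φ in the innermost evaluation
  have step1 : oL a (KH (fun r => φp r z) (fun r s => hφ.bilin.add_left r s z) n) (B x u)
      = -(oL a (KH (φp z) (hφ.bilin.add_right z) P) (B x u)) := by
    rw [← oL_Fneg]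
    refine oL_congr (fun r => ?_) (B x u)
    show ev3 (φp r z) n = -(ev3 (φp z r) P)
    rw [sk D φp hφ.skew hdn r z]
  -- Step 2: transported Leibniz at (P, a)
  have step2 : oL a (KH (φp z) (hφ.bilin.add_right z) P) (B x u)
      = oL P (KH (fun r => B r u) (fun r s => hR.bilin.add_left r s u) (P + a)) (φp z x)
        + oL P (KH (B x) (hR.bilin.add_right x) a) (φp z u) :=
    transport B φp hφ.bilin.add_right hR.bilin.add_left hR.bilin.add_right hφ.leibniz
      P a hPa z x u
  -- Step 3: first summand
  have step3 : oL P (KH (fun r => B r u) (fun r s => hR.bilin.add_left r s u) (P + a)) (φp z x)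
      = oL a (KH (B u) (hR.bilin.add_right u) (n - a)) (φp x z) := by
    have hq : ∀ r, (KH (fun r => B r u) (fun r s => hR.bilin.add_left r s u) (P + a)) (D r)
        = (-(P + a)) ((KH (fun r => B r u) (fun r s => hR.bilin.add_left r s u) (P + a)) r) :=
      fun r => Kd_left D B hR.bilin (P + a) u r
    have hcomm : Commute P (-(P + a)) := ((Commute.refl P).add_right hPa).neg_right
    rw [hφ.skew z x, oL_neg_f, oL_ev1_subNeg D _ hq hcomm]
    have hop : (-(-(P + a)) - P : AddMonoid.End (Pol3 R)) = a := by abel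
    rw [hop]
    have hpt : ∀ r, (KH (fun r => B r u) (fun r s => hR.bilin.add_left r s u) (P + a)) r
        = (-(KH (B u) (hR.bilin.add_right u) (n - a))) r := by
      intro r
      show ev3 (B r u) (P + a) = -(ev3 (B u r) (n - a))
      rw [hops, sk D B hR.skew hdna u r, neg_neg]
    rw [oL_congr hpt, oL_Fneg, neg_neg]
  -- Step 4: second summand
  have step4 : oL P (KH (B x) (hR.bilin.add_right x) a) (φp z u)
      = -(oL (n - a) (KH (B x) (hR.bilin.add_right x) a) (φp u z)) := by
    have hq : ∀ r, (KH (B x) (hR.bilin.add_right x) a) (D r)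
        = (dd D + a) ((KH (B x) (hR.bilin.add_right x) a) r) :=
      fun r => Kd_right D B hR.bilin hda x r
    have hcomm : Commute P (dd D + a) := hPdd.add_right hPa
    rw [hφ.skew z u, oL_neg_f, oL_ev1_subNeg D _ hq hcomm]
    have hop : (-(dd D + a) - P : AddMonoid.End (Pol3 R)) = n - a := by rw [hP]; abel
    rw [hop]
  rw [step1, step2, step3, step4]
  abel

end FL

/-! ### swap and conversion lemmas -/

lemma oL_swap {p q : AddMonoid.End (Pol3 R)} (hpq : Commute p q) (H : R → R → Pol3 R)
    (f g : Pol1 R) :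
    (f.sum fun m r => (p ^ m) (g.sum fun k s => (q ^ k) (H r s)))
      = g.sum fun k s => (q ^ k) (f.sum fun m r => (p ^ m) (H r s)) := by
  have step1 : (f.sum fun m r => (p ^ m) (g.sum fun k s => (q ^ k) (H r s)))
      = f.sum fun m r => g.sum fun k s => (p ^ m) ((q ^ k) (H r s)) :=
    Finsupp.sum_congr fun m _ => map_finsuppSum _ _ _
  rw [step1, Finsupp.sum_comm]
  refine Finsupp.sum_congr fun k _ => ?_
  rw [map_finsuppSum]
  refine Finsupp.sum_congr fun m _ => ?_
  exact DFunLike.congr_fun ((hpq.pow_pow m k).eq) _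

lemma lift3_evXm' (Fp : R → Pol3 R) (hFp : ∀ r s, Fp (r + s) = Fp r + Fp s) (g : Pol1 R) :
    lift3 Fp (ev g Xm) = g.sum fun n s => (xm ^ n) (Fp s) := by
  have hmono : ∀ (n : ℕ) (s : R), lift3 Fp (Xm^[n] (iota3 s)) = (xm ^ n) (Fp s) := by
    intro n s
    rw [Xm_iter_pow, xm_pow_iota, lift3_single Fp hFp]
    simpa using (Xm_iter_pow n (Fp s))
  unfold ev
  show (AddMonoidHom.mk' (lift3 Fp) (lift3_add Fp hFp)) (g.sum fun n r => Xm^[n] (iota3 r)) = _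
  rw [map_finsuppSum]
  exact Finsupp.sum_congr fun n _ => hmono n (g n)

lemma lift3_evXl' (Fp : R → Pol3 R) (hFp : ∀ r s, Fp (r + s) = Fp r + Fp s) (g : Pol1 R) :
    lift3 Fp (ev g Xl) = g.sum fun n s => (xl ^ n) (Fp s) := by
  have hmono : ∀ (n : ℕ) (s : R), lift3 Fp (Xl^[n] (iota3 s)) = (xl ^ n) (Fp s) := by
    intro n s
    rw [Xl_iter_pow, xl_pow_iota, lift3_single Fp hFp]
    simpa using (Xl_iter_pow n (Fp s))
  unfold ev
  show (AddMonoidHom.mk' (lift3 Fp) (lift3_add Fp hFp)) (g.sum fun n r => Xl^[n] (iota3 r)) = _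
  rw [map_finsuppSum]
  exact Finsupp.sum_congr fun n _ => hmono n (g n)

lemma xg_pow_iota' (n : ℕ) (s : R) :
    (xg ^ n) (iota3 s) = Finsupp.single 0 (Finsupp.single 0 (Finsupp.single n s)) :=
  xg_pow_iota n s

lemma lift3_evXg' (Fp : R → Pol3 R) (hFp : ∀ r s, Fp (r + s) = Fp r + Fp s) (g : Pol1 R) :
    lift3 Fp (ev g Xg) = g.sum fun n s => (xg ^ n) (Fp s) := by
  have hmono : ∀ (n : ℕ) (s : R), lift3 Fp (Xg^[n] (iota3 s)) = (xg ^ n) (Fp s) := by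
    intro n s
    rw [Xg_iter_pow, xg_pow_iota', lift3_single Fp hFp]
    simpa using (Xg_iter_pow n (Fp s))
  unfold ev
  show (AddMonoidHom.mk' (lift3 Fp) (lift3_add Fp hFp)) (g.sum fun n r => Xg^[n] (iota3 r)) = _
  rw [map_finsuppSum]
  exact Finsupp.sum_congr fun n _ => hmono n (g n)

lemma lE3_Gadd (p1 p2 p3 : AddMonoid.End (Pol3 R)) (F G : R →+ Pol3 R) (w : Pol3 R) :
    lE3 p1 p2 p3 (F + G) w = lE3 p1 p2 p3 F w + lE3 p1 p2 p3 G w := by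
  unfold lE3
  rw [← Finsupp.sum_add]
  refine Finsupp.sum_congr fun a _ => ?_
  rw [← Finsupp.sum_add]
  refine Finsupp.sum_congr fun b _ => ?_
  rw [← Finsupp.sum_add]
  refine Finsupp.sum_congr fun c _ => ?_
  simp

lemma lEE_Gadd (F G : R →+ Pol3 R) (w : Pol3 R) : lEE (F + G) w = lEE F w + lEE G w :=
  lE3_Gadd xl xm xg F G w

/-! ### value-level bracket operators -/

section Value

variable (D : R →ₗ[ℂ] R) (B φp : R → R → Pol1 R)

noncomputable def kB2 (hR : IsLieConformal D B) (e : AddMonoid.End (Pol3 R)) (x : R) :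
    R →+ Pol3 R := KH (B x) (hR.bilin.add_right x) e

noncomputable def kB1 (hR : IsLieConformal D B) (e : AddMonoid.End (Pol3 R)) (z : R) :
    R →+ Pol3 R := KH (fun r => B r z) (fun r s => hR.bilin.add_left r s z) e

noncomputable def kp2 (hφ : IsConfBiderivation D B φp) (e : AddMonoid.End (Pol3 R)) (x : R) :
    R →+ Pol3 R := KH (φp x) (hφ.bilin.add_right x) e

noncomputable def kp1 (hφ : IsConfBiderivation D B φp) (e : AddMonoid.End (Pol3 R)) (z : R) :
    R →+ Pol3 R := KH (fun r => φp r z) (fun r s => hφ.bilin.add_left r s z) e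

variable (hR : IsLieConformal D B)

lemma kB2_addx (e : AddMonoid.End (Pol3 R)) (r s : R) :
    kB2 D B hR e (r + s) = kB2 D B hR e r + kB2 D B hR e s := by
  refine AddMonoidHom.ext fun yy => ?_
  show ev3 (B (r + s) yy) e = (kB2 D B hR e r + kB2 D B hR e s) yy
  rw [AddMonoidHom.add_apply]
  show _ = ev3 (B r yy) e + ev3 (B s yy) e
  rw [hR.bilin.add_left]
  exact ev3_add_f _ _ e

lemma kB1_addz (e : AddMonoid.End (Pol3 R)) (z z' : R) :
    kB1 D B hR e (z + z') = kB1 D B hR e z + kB1 D B hR e z' := by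
  refine AddMonoidHom.ext fun yy => ?_
  show ev3 (B yy (z + z')) e = (kB1 D B hR e z + kB1 D B hR e z') yy
  rw [AddMonoidHom.add_apply]
  show _ = ev3 (B yy z) e + ev3 (B yy z') e
  rw [hR.bilin.add_right]
  exact ev3_add_f _ _ e

noncomputable def vBR (e : AddMonoid.End (Pol3 R)) (v : R) : AddMonoid.End (Pol3 R) :=
  lEE (kB1 D B hR e v)

noncomputable def vBL (e : AddMonoid.End (Pol3 R)) (x : R) : AddMonoid.End (Pol3 R) :=
  lEE (kB2 D B hR e x)

noncomputable def vBRP (e : AddMonoid.End (Pol3 R)) (V : Pol3 R) : AddMonoid.End (Pol3 R) :=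
  lEE (AddMonoidHom.mk' (fun r => lEE (kB2 D B hR e r) V)
    (fun r s => by
      show lEE (kB2 D B hR e (r + s)) V = lEE (kB2 D B hR e r) V + lEE (kB2 D B hR e s) V
      rw [kB2_addx D B hR e r s]
      exact lEE_Gadd _ _ V))

noncomputable def vBBL (e : AddMonoid.End (Pol3 R)) (V : Pol3 R) : AddMonoid.End (Pol3 R) :=
  lEE (AddMonoidHom.mk' (fun s => vBR D B hR e s V)
    (fun s s' => by
      show lEE (kB1 D B hR e (s + s')) V = lEE (kB1 D B hR e s) V + lEE (kB1 D B hR e s') V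
      rw [kB1_addz D B hR e s s']
      exact lEE_Gadd _ _ V))

/-- Jacobi with generic polynomial argument in the inner-right position. -/
lemma JvA (e1 e2 : AddMonoid.End (Pol3 R))
    (hc1 : ∀ G : R →+ Pol3 R, Commute e1 (lEE G))
    (hc2 : ∀ G : R →+ Pol3 R, Commute e2 (lEE G))
    (h12 : Commute e1 e2) (u v : R) (Q : Pol3 R) :
    vBL D B hR e1 u (vBR D B hR e2 v Q)
      = vBR D B hR (e1 + e2) v (vBL D B hR e1 u Q) + vBRP D B hR e2 (ev3 (B u v) e1) Q := by
  have key : ∀ c : R, (vBL D B hR e1 u * vBR D B hR e2 v) (iota3 c)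
      = (vBR D B hR (e1 + e2) v * vBL D B hR e1 u + vBRP D B hR e2 (ev3 (B u v) e1))
          (iota3 c) := by
    intro c
    rw [End_add_apply]
    show vBL D B hR e1 u (vBR D B hR e2 v (iota3 c))
        = vBR D B hR (e1 + e2) v (vBL D B hR e1 u (iota3 c))
          + vBRP D B hR e2 (ev3 (B u v) e1) (iota3 c)
    have h1 : vBR D B hR e2 v (iota3 c) = ev3 (B c v) e2 := lEE_iota _ c
    have h2 : vBL D B hR e1 u (iota3 c) = ev3 (B u c) e1 := lEE_iota _ c
    have h3 : vBRP D B hR e2 (ev3 (B u v) e1) (iota3 c)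
        = lEE (kB2 D B hR e2 c) (ev3 (B u v) e1) := lEE_iota _ c
    rw [h1, h2, h3]
    have h4 : vBL D B hR e1 u (ev3 (B c v) e2) = oL e2 (kB2 D B hR e1 u) (B c v) :=
      lEE_ev3 _ (hc2 _) _
    have h5 : vBR D B hR (e1 + e2) v (ev3 (B u c) e1)
        = oL e1 (kB1 D B hR (e1 + e2) v) (B u c) := lEE_ev3 _ (hc1 _) _
    have h6 : lEE (kB2 D B hR e2 c) (ev3 (B u v) e1)
        = oL e1 (kB2 D B hR e2 c) (B u v) := lEE_ev3 _ (hc1 _) _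
    rw [h4, h5, h6]
    exact transport B B hR.bilin.add_right hR.bilin.add_left hR.bilin.add_right hR.jacobi
      e1 e2 h12 u c v
  have cA : ∀ (e : AddMonoid.End (Pol3 R)) (x : R), Commute (vBL D B hR e x) xl ∧
      Commute (vBL D B hR e x) xm ∧ Commute (vBL D B hR e x) xg :=
    fun e x => ⟨commute_lEE_xl _, commute_lEE_xm _, commute_lEE_xg _⟩
  have cB : ∀ (e : AddMonoid.End (Pol3 R)) (x : R), Commute (vBR D B hR e x) xl ∧
      Commute (vBR D B hR e x) xm ∧ Commute (vBR D B hR e x) xg :=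
    fun e x => ⟨commute_lEE_xl _, commute_lEE_xm _, commute_lEE_xg _⟩
  have cC : ∀ (e : AddMonoid.End (Pol3 R)) (V : Pol3 R), Commute (vBRP D B hR e V) xl ∧
      Commute (vBRP D B hR e V) xm ∧ Commute (vBRP D B hR e V) xg :=
    fun e V => ⟨commute_lEE_xl _, commute_lEE_xm _, commute_lEE_xg _⟩
  have h := end_ext
    (((cA e1 u).1).mul_left ((cB e2 v).1))
    (((cA e1 u).2.1).mul_left ((cB e2 v).2.1))
    (((cA e1 u).2.2).mul_left ((cB e2 v).2.2))
    ((((cB (e1+e2) v).1).mul_left ((cA e1 u).1)).add_left ((cC e2 (ev3 (B u v) e1)).1))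
    ((((cB (e1+e2) v).2.1).mul_left ((cA e1 u).2.1)).add_left ((cC e2 (ev3 (B u v) e1)).2.1))
    ((((cB (e1+e2) v).2.2).mul_left ((cA e1 u).2.2)).add_left ((cC e2 (ev3 (B u v) e1)).2.2))
    key Q
  rw [End_add_apply] at h
  exact h

/-- Jacobi with generic polynomial argument in the inner second slot. -/
lemma JvB (e1 e2 : AddMonoid.End (Pol3 R))
    (hc1 : ∀ G : R →+ Pol3 R, Commute e1 (lEE G))
    (hc2 : ∀ G : R →+ Pol3 R, Commute e2 (lEE G))
    (h12 : Commute e1 e2) (u y : R) (Q : Pol3 R) :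
    vBL D B hR e1 u (vBL D B hR e2 y Q)
      = vBBL D B hR (e1 + e2) (ev3 (B u y) e1) Q + vBL D B hR e2 y (vBL D B hR e1 u Q) := by
  have key : ∀ c : R, (vBL D B hR e1 u * vBL D B hR e2 y) (iota3 c)
      = (vBBL D B hR (e1 + e2) (ev3 (B u y) e1) + vBL D B hR e2 y * vBL D B hR e1 u)
          (iota3 c) := by
    intro c
    rw [End_add_apply]
    show vBL D B hR e1 u (vBL D B hR e2 y (iota3 c))
        = vBBL D B hR (e1 + e2) (ev3 (B u y) e1) (iota3 c)
          + vBL D B hR e2 y (vBL D B hR e1 u (iota3 c))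
    have h1 : vBL D B hR e2 y (iota3 c) = ev3 (B y c) e2 := lEE_iota _ c
    have h2 : vBL D B hR e1 u (iota3 c) = ev3 (B u c) e1 := lEE_iota _ c
    have h3 : vBBL D B hR (e1 + e2) (ev3 (B u y) e1) (iota3 c)
        = lEE (kB1 D B hR (e1 + e2) c) (ev3 (B u y) e1) := lEE_iota _ c
    rw [h1, h2, h3]
    have h4 : vBL D B hR e1 u (ev3 (B y c) e2) = oL e2 (kB2 D B hR e1 u) (B y c) :=
      lEE_ev3 _ (hc2 _) _
    have h5 : lEE (kB1 D B hR (e1 + e2) c) (ev3 (B u y) e1)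
        = oL e1 (kB1 D B hR (e1 + e2) c) (B u y) := lEE_ev3 _ (hc1 _) _
    have h6 : vBL D B hR e2 y (ev3 (B u c) e1) = oL e1 (kB2 D B hR e2 y) (B u c) :=
      lEE_ev3 _ (hc1 _) _
    rw [h4, h5, h6]
    exact transport B B hR.bilin.add_right hR.bilin.add_left hR.bilin.add_right hR.jacobi
      e1 e2 h12 u y c
  have cA : ∀ (e : AddMonoid.End (Pol3 R)) (x : R), Commute (vBL D B hR e x) xl ∧
      Commute (vBL D B hR e x) xm ∧ Commute (vBL D B hR e x) xg :=
    fun e x => ⟨commute_lEE_xl _, commute_lEE_xm _, commute_lEE_xg _⟩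
  have cD : ∀ (e : AddMonoid.End (Pol3 R)) (V : Pol3 R), Commute (vBBL D B hR e V) xl ∧
      Commute (vBBL D B hR e V) xm ∧ Commute (vBBL D B hR e V) xg :=
    fun e V => ⟨commute_lEE_xl _, commute_lEE_xm _, commute_lEE_xg _⟩
  have h := end_ext
    (((cA e1 u).1).mul_left ((cA e2 y).1))
    (((cA e1 u).2.1).mul_left ((cA e2 y).2.1))
    (((cA e1 u).2.2).mul_left ((cA e2 y).2.2))
    (((cD (e1+e2) (ev3 (B u y) e1)).1).add_left (((cA e2 y).1).mul_left ((cA e1 u).1)))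
    (((cD (e1+e2) (ev3 (B u y) e1)).2.1).add_left (((cA e2 y).2.1).mul_left ((cA e1 u).2.1)))
    (((cD (e1+e2) (ev3 (B u y) e1)).2.2).add_left (((cA e2 y).2.2).mul_left ((cA e1 u).2.2)))
    key Q
  rw [End_add_apply] at h
  exact h

lemma kp1_addz (hφ : IsConfBiderivation D B φp) (e : AddMonoid.End (Pol3 R)) (z z' : R) :
    kp1 D B φp hφ e (z + z') = kp1 D B φp hφ e z + kp1 D B φp hφ e z' := by
  refine AddMonoidHom.ext fun yy => ?_
  show ev3 (φp yy (z + z')) e = (kp1 D B φp hφ e z + kp1 D B φp hφ e z') yy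
  rw [AddMonoidHom.add_apply]
  show _ = ev3 (φp yy z) e + ev3 (φp yy z') e
  rw [hφ.bilin.add_right]
  exact ev3_add_f _ _ e

/-- The central identity `(G')`:
`[(φ_μ(x,y))_{μ+γ}[u_λ v]] + [[u_λ y]_{λ+γ} φ_μ(x,v)]
   = [(φ_λ(u,y))_{λ+γ}[x_μ v]] + [[x_μ y]_{μ+γ} φ_λ(u,v)]`. -/
theorem Gprime (hφ : IsConfBiderivation D B φp) (x y u v : R) :
    vBRP D B hR (xm + xg) (ev3 (B u v) xl) (ev3 (φp x y) xm)
        + vBBL D B hR (xl + xg) (ev3 (B u y) xl) (ev3 (φp x v) xm)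
      = vBRP D B hR (xl + xg) (ev3 (B x v) xm) (ev3 (φp u y) xl)
        + vBBL D B hR (xm + xg) (ev3 (B x y) xm) (ev3 (φp u v) xl) := by
  -- commutation facts
  have hcl : ∀ G : R →+ Pol3 R, Commute (xl (R := R)) (lEE G) :=
    fun G => (commute_lEE_xl G).symm
  have hcm : ∀ G : R →+ Pol3 R, Commute (xm (R := R)) (lEE G) :=
    fun G => (commute_lEE_xm G).symm
  have hcg : ∀ G : R →+ Pol3 R, Commute (xg (R := R)) (lEE G) :=
    fun G => (commute_lEE_xg G).symm
  have hcmg : ∀ G : R →+ Pol3 R, Commute (xm + xg : AddMonoid.End (Pol3 R)) (lEE G) :=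
    fun G => (hcm G).add_left (hcg G)
  have hclg : ∀ G : R →+ Pol3 R, Commute (xl + xg : AddMonoid.End (Pol3 R)) (lEE G) :=
    fun G => (hcl G).add_left (hcg G)
  have hcnn : ∀ G : R →+ Pol3 R, Commute (xl + xm : AddMonoid.End (Pol3 R)) (lEE G) :=
    fun G => (hcl G).add_left (hcm G)
  set nn : AddMonoid.End (Pol3 R) := xl + xm with hnn
  have hdn : Commute (dd D) nn := (commute_dd_xl D).add_right (commute_dd_xm D)
  have hda : Commute (dd D) (xm (R := R)) := commute_dd_xm D
  have hna : Commute nn (xm (R := R)) := commute_xl_xm.add_left (Commute.refl xm)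
  have hnxg : Commute nn (xg (R := R)) := commute_xl_xg.add_left commute_xm_xg
  have hopa : nn - xm = xl := by rw [hnn]; abel
  -- abbreviations
  set Pxy : Pol3 R := ev3 (φp x y) xm with hPxy
  set Puy : Pol3 R := ev3 (φp u y) xl with hPuy
  set Pxv : Pol3 R := ev3 (φp x v) xm with hPxv
  set Puv : Pol3 R := ev3 (φp u v) xl with hPuv
  -- the central object EE = φ_ν([x_μ u], [y_γ v]) with ν = λ+μ
  have hEEadd : ∀ r r' : R, oL xg (kp2 D B φp hφ nn (r + r')) (B y v)
      = oL xg (kp2 D B φp hφ nn r) (B y v) + oL xg (kp2 D B φp hφ nn r') (B y v) := by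
    intro r r'
    have : kp2 D B φp hφ nn (r + r') = kp2 D B φp hφ nn r + kp2 D B φp hφ nn r' := by
      refine AddMonoidHom.ext fun s => ?_
      show ev3 (φp (r + r') s) nn = (kp2 D B φp hφ nn r + kp2 D B φp hφ nn r') s
      rw [AddMonoidHom.add_apply]
      show _ = ev3 (φp r s) nn + ev3 (φp r' s) nn
      rw [hφ.bilin.add_left]
      exact ev3_add_f _ _ nn
    rw [this, oL_Fadd]
  set EEfun : R →+ Pol3 R :=
    AddMonoidHom.mk' (fun r => oL xg (kp2 D B φp hφ nn r) (B y v)) hEEadd with hEEfun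
  -- FL instances
  have FLy : oL xm (kp1 D B φp hφ nn y) (B x u)
      = -(oL xm (kB2 D B hR xl u) (φp x y)) + oL xl (kB2 D B hR xm x) (φp u y) := by
    have h := FL D B φp hR hφ hdn hda hna x u y
    rw [hopa] at h
    exact h
  have FLv : oL xm (kp1 D B φp hφ nn v) (B x u)
      = -(oL xm (kB2 D B hR xl u) (φp x v)) + oL xl (kB2 D B hR xm x) (φp u v) := by
    have h := FL D B φp hR hφ hdn hda hna x u v
    rw [hopa] at h
    exact h
  -- ================= Way 1 =================
  have way1 : oL xm EEfun (B x u)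
      = vBR D B hR (nn + xg) v (oL xm (kp1 D B φp hφ nn y) (B x u))
        + vBL D B hR xg y (oL xm (kp1 D B φp hφ nn v) (B x u)) := by
    have hptw : ∀ r : R, EEfun r
        = (((vBR D B hR (nn + xg) v : AddMonoid.End (Pol3 R)) : Pol3 R →+ Pol3 R).comp
            (kp1 D B φp hφ nn y)
          + ((vBL D B hR xg y : AddMonoid.End (Pol3 R)) : Pol3 R →+ Pol3 R).comp
            (kp1 D B φp hφ nn v)) r := by
      intro r
      rw [AddMonoidHom.add_apply]
      show oL xg (kp2 D B φp hφ nn r) (B y v)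
          = vBR D B hR (nn + xg) v (ev3 (φp r y) nn) + vBL D B hR xg y (ev3 (φp r v) nn)
      have ht := transport B φp hφ.bilin.add_right hR.bilin.add_left hR.bilin.add_right
        hφ.leibniz nn xg hnxg r y v
      rw [show vBR D B hR (nn + xg) v (ev3 (φp r y) nn)
          = oL nn (kB1 D B hR (nn + xg) v) (φp r y) from lEE_ev3 _ (hcnn _) _,
        show vBL D B hR xg y (ev3 (φp r v) nn)
          = oL nn (kB2 D B hR xg y) (φp r v) from lEE_ev3 _ (hcnn _) _]
      exact ht
    rw [oL_congr hptw, oL_Fadd]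
    have hp1 : oL xm (AddMonoidHom.comp (vBR D B hR (nn + xg) v) (kp1 D B φp hφ nn y))
          (B x u)
        = vBR D B hR (nn + xg) v (oL xm (kp1 D B φp hφ nn y) (B x u)) :=
      oL_pull (hcm _) (kp1 D B φp hφ nn y) (B x u)
    have hp2 : oL xm (AddMonoidHom.comp (vBL D B hR xg y) (kp1 D B φp hφ nn v)) (B x u)
        = vBL D B hR xg y (oL xm (kp1 D B φp hφ nn v) (B x u)) :=
      oL_pull (hcm _) (kp1 D B φp hφ nn v) (B x u)
    rw [hp1, hp2]
  -- rewrite the two inner sums by the first-slot Leibniz rule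
  rw [FLy, FLv] at way1
  rw [show vBR D B hR (nn + xg) v
        (-(oL xm (kB2 D B hR xl u) (φp x y))
          + oL xl (kB2 D B hR xm x) (φp u y))
      = -(vBR D B hR (nn + xg) v (oL xm (kB2 D B hR xl u) (φp x y)))
        + vBR D B hR (nn + xg) v (oL xl (kB2 D B hR xm x) (φp u y)) from by
    rw [map_add, map_neg]] at way1
  rw [show vBL D B hR xg y
        (-(oL xm (kB2 D B hR xl u) (φp x v))
          + oL xl (kB2 D B hR xm x) (φp u v))
      = -(vBL D B hR xg y (oL xm (kB2 D B hR xl u) (φp x v)))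
        + vBL D B hR xg y (oL xl (kB2 D B hR xm x) (φp u v)) from by
    rw [map_add, map_neg]] at way1
  rw [show oL xm (kB2 D B hR xl u) (φp x y) = vBL D B hR xl u Pxy from
      (lEE_ev3 _ (hcm _) _).symm,
    show oL xl (kB2 D B hR xm x) (φp u y) = vBL D B hR xm x Puy from
      (lEE_ev3 _ (hcl _) _).symm,
    show oL xm (kB2 D B hR xl u) (φp x v) = vBL D B hR xl u Pxv from
      (lEE_ev3 _ (hcm _) _).symm,
    show oL xl (kB2 D B hR xm x) (φp u v) = vBL D B hR xm x Puv from
      (lEE_ev3 _ (hcl _) _).symm] at way1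
  -- ================= Way 2 =================
  have hGadd : ∀ s s' : R, oL xm (kp1 D B φp hφ nn (s + s')) (B x u)
      = oL xm (kp1 D B φp hφ nn s) (B x u) + oL xm (kp1 D B φp hφ nn s') (B x u) := by
    intro s s'
    rw [kp1_addz D B φp hφ nn s s', oL_Fadd]
  have way2 : oL xm EEfun (B x u)
      = oL xg (AddMonoidHom.mk' (fun s => oL xm (kp1 D B φp hφ nn s) (B x u)) hGadd)
          (B y v) := by
    show ((B x u).sum fun m r => (xm ^ m)
        ((B y v).sum fun k s => (xg ^ k) (ev3 (φp r s) nn))) = _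
    rw [oL_swap commute_xm_xg (fun r s => ev3 (φp r s) nn) (B x u) (B y v)]
    rfl
  -- pointwise first-slot Leibniz in way2
  have FLs : ∀ s : R, oL xm (kp1 D B φp hφ nn s) (B x u)
      = -(oL xm (kB2 D B hR xl u) (φp x s)) + oL xl (kB2 D B hR xm x) (φp u s) := by
    intro s
    have h := FL D B φp hR hφ hdn hda hna x u s
    rw [hopa] at h
    exact h
  have hG1add : ∀ s s' : R, oL xm (kB2 D B hR xl u) (φp x (s + s'))
      = oL xm (kB2 D B hR xl u) (φp x s) + oL xm (kB2 D B hR xl u) (φp x s') := by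
    intro s s'
    rw [hφ.bilin.add_right, oL_add_f]
  have hG2add : ∀ s s' : R, oL xl (kB2 D B hR xm x) (φp u (s + s'))
      = oL xl (kB2 D B hR xm x) (φp u s) + oL xl (kB2 D B hR xm x) (φp u s') := by
    intro s s'
    rw [hφ.bilin.add_right, oL_add_f]
  have way2' : oL xm EEfun (B x u)
      = -(oL xg (AddMonoidHom.mk' (fun s => oL xm (kB2 D B hR xl u) (φp x s)) hG1add)
            (B y v))
        + oL xg (AddMonoidHom.mk' (fun s => oL xl (kB2 D B hR xm x) (φp u s)) hG2add)
            (B y v) := by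
    rw [way2, ← oL_Fneg, ← oL_Fadd]
    refine oL_congr (fun s => ?_) (B y v)
    rw [AddMonoidHom.add_apply, AddMonoidHom.neg_apply]
    exact FLs s
  -- convert the two way2 summands to value form via the second-slot Leibniz rule
  have conv1 : oL xg (AddMonoidHom.mk' (fun s => oL xm (kB2 D B hR xl u) (φp x s)) hG1add)
        (B y v)
      = vBL D B hR xl u (vBR D B hR (xm + xg) v Pxy + vBL D B hR xg y Pxv) := by
    have hcomp : ∀ s : R, (AddMonoidHom.mk' (fun s => oL xm (kB2 D B hR xl u) (φp x s))
          hG1add) s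
        = (((vBL D B hR xl u : AddMonoid.End (Pol3 R)) : Pol3 R →+ Pol3 R).comp
            (kp2 D B φp hφ xm x)) s := by
      intro s
      show oL xm (kB2 D B hR xl u) (φp x s) = vBL D B hR xl u (ev3 (φp x s) xm)
      exact (lEE_ev3 _ (hcm _) _).symm
    rw [oL_congr hcomp]
    have hp : oL xg (AddMonoidHom.comp (vBL D B hR xl u) (kp2 D B φp hφ xm x)) (B y v)
        = vBL D B hR xl u (oL xg (kp2 D B φp hφ xm x) (B y v)) :=
      oL_pull (hcg _) (kp2 D B φp hφ xm x) (B y v)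
    rw [hp]
    congr 1
    have ht := transport B φp hφ.bilin.add_right hR.bilin.add_left hR.bilin.add_right
      hφ.leibniz xm xg commute_xm_xg x y v
    rw [show vBR D B hR (xm + xg) v Pxy = oL xm (kB1 D B hR (xm + xg) v) (φp x y) from
        lEE_ev3 _ (hcm _) _,
      show vBL D B hR xg y Pxv = oL xm (kB2 D B hR xg y) (φp x v) from
        lEE_ev3 _ (hcm _) _]
    exact ht
  have conv2 : oL xg (AddMonoidHom.mk' (fun s => oL xl (kB2 D B hR xm x) (φp u s)) hG2add)
        (B y v)
      = vBL D B hR xm x (vBR D B hR (xl + xg) v Puy + vBL D B hR xg y Puv) := by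
    have hcomp : ∀ s : R, (AddMonoidHom.mk' (fun s => oL xl (kB2 D B hR xm x) (φp u s))
          hG2add) s
        = (((vBL D B hR xm x : AddMonoid.End (Pol3 R)) : Pol3 R →+ Pol3 R).comp
            (kp2 D B φp hφ xl u)) s := by
      intro s
      show oL xl (kB2 D B hR xm x) (φp u s) = vBL D B hR xm x (ev3 (φp u s) xl)
      exact (lEE_ev3 _ (hcl _) _).symm
    rw [oL_congr hcomp]
    have hp : oL xg (AddMonoidHom.comp (vBL D B hR xm x) (kp2 D B φp hφ xl u)) (B y v)
        = vBL D B hR xm x (oL xg (kp2 D B φp hφ xl u) (B y v)) :=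
      oL_pull (hcg _) (kp2 D B φp hφ xl u) (B y v)
    rw [hp]
    congr 1
    have ht := transport B φp hφ.bilin.add_right hR.bilin.add_left hR.bilin.add_right
      hφ.leibniz xl xg commute_xl_xg u y v
    rw [show vBR D B hR (xl + xg) v Puy = oL xl (kB1 D B hR (xl + xg) v) (φp u y) from
        lEE_ev3 _ (hcl _) _,
      show vBL D B hR xg y Puv = oL xl (kB2 D B hR xg y) (φp u v) from
        lEE_ev3 _ (hcl _) _]
    exact ht
  rw [conv1, conv2] at way2'
  -- expand way2' by Jacobi with polynomial arguments
  rw [map_add (vBL D B hR xl u), map_add (vBL D B hR xm x)] at way2'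
  rw [JvA D B hR xl (xm + xg) hcl hcmg (commute_xl_xm.add_right commute_xl_xg) u v Pxy,
    JvB D B hR xl xg hcl hcg commute_xl_xg u y Pxv,
    JvA D B hR xm (xl + xg) hcm hclg (commute_xl_xm.symm.add_right commute_xm_xg) x v Puy,
    JvB D B hR xm xg hcm hcg commute_xm_xg x y Puv] at way2'
  rw [show (xl + (xm + xg) : AddMonoid.End (Pol3 R)) = nn + xg from by rw [hnn]; abel,
    show (xm + (xl + xg) : AddMonoid.End (Pol3 R)) = nn + xg from by rw [hnn]; abel] at way2'
  -- combine
  have hmain := way1.symm.trans way2'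
  have key := sub_eq_zero_of_eq hmain
  rw [← sub_eq_zero]
  abel_nf at key ⊢
  exact key

/-! ### decomposition of `Phi` -/

noncomputable def Fouter (e1 M : AddMonoid.End (Pol3 R)) (g : Pol1 R) : R →+ Pol3 R :=
  AddMonoidHom.mk' (fun r => oL e1 (kB2 D B hR M r) g)
    (fun r s => by
      show oL e1 (kB2 D B hR M (r + s)) g = oL e1 (kB2 D B hR M r) g + oL e1 (kB2 D B hR M s) g
      rw [kB2_addx D B hR M r s, oL_Fadd])

lemma phi_oL (P1 P2 P3 : Pol3 R → Pol3 R) (E1 E2 E3 : AddMonoid.End (Pol3 R))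
    (h1 : P1 = ⇑E1) (h2 : P2 = ⇑E2) (h3 : P3 = ⇑E3)
    (hP1 : ∀ (Fp : R → Pol3 R), (∀ r s, Fp (r + s) = Fp r + Fp s) →
      ∀ g : Pol1 R, lift3 Fp (ev g P1) = g.sum fun n s => (E1 ^ n) (Fp s))
    (hP2 : ∀ (Fp : R → Pol3 R), (∀ r s, Fp (r + s) = Fp r + Fp s) →
      ∀ g : Pol1 R, lift3 Fp (ev g P2) = g.sum fun n s => (E2 ^ n) (Fp s))
    (x y u v : R) :
    Phi B φp P1 P2 P3 x y u v
      = oL E2 (Fouter D B hR E1 (E2 + E3) (B u v)) (φp x y)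
        - oL E2 (Fouter D B hR E1 (E2 + E3) (φp u v)) (B x y) := by
  subst h1 h2 h3
  have hinadd : ∀ (r s s' : R), ev (B r (s + s')) (fun z => E2 z + E3 z)
      = ev (B r s) (fun z => E2 z + E3 z) + ev (B r s') (fun z => E2 z + E3 z) := by
    intro r s s'
    rw [hR.bilin.add_right]
    exact ev3_add_f _ _ (E2 + E3)
  have hin : ∀ (r : R) (g : Pol1 R),
      lift3 (fun s => ev (B r s) (fun z => E2 z + E3 z)) (ev g ⇑E1)
        = oL E1 (kB2 D B hR (E2 + E3) r) g := by
    intro r g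
    rw [hP1 _ (hinadd r) g]
    exact Finsupp.sum_congr fun n _ => rfl
  have hFo : ∀ (g : Pol1 R) (r r' : R),
      lift3 (fun s => ev (B (r + r') s) (fun z => E2 z + E3 z)) (ev g ⇑E1)
        = lift3 (fun s => ev (B r s) (fun z => E2 z + E3 z)) (ev g ⇑E1)
          + lift3 (fun s => ev (B r' s) (fun z => E2 z + E3 z)) (ev g ⇑E1) := by
    intro g r r'
    rw [hin, hin, hin, kB2_addx D B hR (E2 + E3) r r', oL_Fadd]
  show lift3 _ (ev (φp x y) ⇑E2) - lift3 _ (ev (B x y) ⇑E2) = _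
  rw [hP2 _ (hFo (B u v)) (φp x y), hP2 _ (hFo (φp u v)) (B x y)]
  congr 1
  · refine Finsupp.sum_congr fun n _ => ?_
    rw [hin]
    rfl
  · refine Finsupp.sum_congr fun n _ => ?_
    rw [hin]
    rfl

lemma oL_to_vBRP (E1 E2 M : AddMonoid.End (Pol3 R))
    (hcE1 : ∀ G : R →+ Pol3 R, Commute E1 (lEE G))
    (hcE2 : ∀ G : R →+ Pol3 R, Commute E2 (lEE G)) (g f : Pol1 R) :
    oL E2 (Fouter D B hR E1 M g) f = vBRP D B hR M (ev3 g E1) (ev3 f E2) := by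
  rw [show vBRP D B hR M (ev3 g E1) (ev3 f E2)
      = oL E2 (AddMonoidHom.mk' (fun r => lEE (kB2 D B hR M r) (ev3 g E1))
          (fun r s => by
            show lEE (kB2 D B hR M (r + s)) (ev3 g E1) = _
            rw [kB2_addx D B hR M r s]
            exact lEE_Gadd _ _ _)) f from lEE_ev3 _ (hcE2 _) _]
  exact oL_congr (fun r => (lEE_ev3 _ (hcE1 _) _).symm) f

lemma oL_to_vBBL (E1 E2 M : AddMonoid.End (Pol3 R))
    (hcE1 : ∀ G : R →+ Pol3 R, Commute E1 (lEE G))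
    (hcE2 : ∀ G : R →+ Pol3 R, Commute E2 (lEE G))
    (h21 : Commute E2 E1) (g f : Pol1 R) :
    oL E2 (Fouter D B hR E1 M g) f = vBBL D B hR M (ev3 f E2) (ev3 g E1) := by
  have lhs : oL E2 (Fouter D B hR E1 M g) f
      = g.sum fun k s => (E1 ^ k) (f.sum fun m r => (E2 ^ m) (ev3 (B r s) M)) := by
    show (f.sum fun m r => (E2 ^ m) (g.sum fun k s => (E1 ^ k) (ev3 (B r s) M))) = _
    exact oL_swap h21 (fun r s => ev3 (B r s) M) f g
  rw [lhs]
  rw [show vBBL D B hR M (ev3 f E2) (ev3 g E1)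
      = oL E1 (AddMonoidHom.mk' (fun s => vBR D B hR M s (ev3 f E2))
          (fun s s' => by
            show lEE (kB1 D B hR M (s + s')) (ev3 f E2) = _
            rw [kB1_addz D B hR M s s']
            exact lEE_Gadd _ _ _)) g from lEE_ev3 _ (hcE1 _) _]
  unfold oL
  refine Finsupp.sum_congr fun k _ => ?_
  congr 1
  show (f.sum fun m r => (E2 ^ m) (ev3 (B r (g k)) M)) = vBR D B hR M (g k) (ev3 f E2)
  exact (lEE_ev3 (kB1 D B hR M (g k)) (hcE2 _) f).symm

end Value


/-- for a conformal biderivation `φ`, the expression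
`Φ_{λ,μ,γ}(x,y;u,v) = [(φ_μ(x,y))_{μ+γ}[u_λ v]] - [[x_μ y]_{μ+γ} φ_λ(u,v)]` satisfies the
symmetry `Φ_{λ,μ,γ}(x,y;u,v) = Φ_{μ,λ,γ}(u,y;x,v)` and the antisymmetry
`Φ_{λ,μ,γ}(x,y;u,v) = -Φ_{λ,γ,μ}(y,x;u,v)`. -/
theorem Phi_symmetries {R : Type} [AddCommGroup R] [Module ℂ R]
    (D : R →ₗ[ℂ] R) (B : R → R → Pol1 R) (hR : IsLieConformal D B)
    (φ : R → R → Pol1 R) (hφ : IsConfBiderivation D B φ) :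
    ∀ x y u v : R,
      Phi B φ Xl Xm Xg x y u v = Phi B φ Xm Xl Xg u y x v
        ∧ Phi B φ Xl Xm Xg x y u v = -(Phi B φ Xl Xg Xm y x u v) := by
  intro x y u v
  have hcl : ∀ G : R →+ Pol3 R, Commute (xl (R := R)) (lEE G) :=
    fun G => (commute_lEE_xl G).symm
  have hcm : ∀ G : R →+ Pol3 R, Commute (xm (R := R)) (lEE G) :=
    fun G => (commute_lEE_xm G).symm
  constructor
  · -- symmetry
    rw [phi_oL D B φ hR Xl Xm Xg xl xm xg coe_xl.symm coe_xm.symm coe_xg.symm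
        lift3_evXl' lift3_evXm' x y u v,
      phi_oL D B φ hR Xm Xl Xg xm xl xg coe_xm.symm coe_xl.symm coe_xg.symm
        lift3_evXm' lift3_evXl' u y x v,
      oL_to_vBRP D B hR xl xm (xm + xg) hcl hcm (B u v) (φ x y),
      oL_to_vBBL D B hR xl xm (xm + xg) hcl hcm commute_xl_xm.symm (φ u v) (B x y),
      oL_to_vBRP D B hR xm xl (xl + xg) hcm hcl (B x v) (φ u y),
      oL_to_vBBL D B hR xm xl (xl + xg) hcm hcl commute_xl_xm (φ x v) (B u y)]
    rw [sub_eq_sub_iff_add_eq_add]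
    exact Gprime D B φ hR hφ x y u v
  · -- antisymmetry
    rw [phi_oL D B φ hR Xl Xm Xg xl xm xg coe_xl.symm coe_xm.symm coe_xg.symm
        lift3_evXl' lift3_evXm' x y u v,
      phi_oL D B φ hR Xl Xg Xm xl xg xm coe_xl.symm coe_xg.symm coe_xm.symm
        lift3_evXl' lift3_evXg' y x u v,
      show (xg + xm : AddMonoid.End (Pol3 R)) = xm + xg from add_comm xg xm]
    have hq : ∀ (g : Pol1 R) (r : R),
        (Fouter D B hR xl (xm + xg) g) (D r)
          = (-(xm + xg) : AddMonoid.End (Pol3 R)) ((Fouter D B hR xl (xm + xg) g) r) := by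
      intro g r
      show oL xl (kB2 D B hR (xm + xg) (D r)) g
          = (-(xm + xg) : AddMonoid.End (Pol3 R)) (oL xl (kB2 D B hR (xm + xg) r) g)
      have hpt : ∀ s, (kB2 D B hR (xm + xg) (D r)) s
          = (((-(xm + xg) : AddMonoid.End (Pol3 R)) : Pol3 R →+ Pol3 R).comp
              (kB2 D B hR (xm + xg) r)) s :=
        fun s => Kd_left D B hR.bilin (xm + xg) s r
      rw [oL_congr hpt]
      exact oL_pull ((commute_xl_xm.add_right commute_xl_xg).neg_right) _ g
    have hcomm : Commute (xm (R := R)) (-(xm + xg) : AddMonoid.End (Pol3 R)) :=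
      ((Commute.refl xm).add_right commute_xm_xg).neg_right
    have hop : (-(-(xm + xg)) - xm : AddMonoid.End (Pol3 R)) = xg := by abel
    have hT1 : oL xm (Fouter D B hR xl (xm + xg) (B u v)) (φ x y)
        = -(oL xg (Fouter D B hR xl (xm + xg) (B u v)) (φ y x)) := by
      rw [hφ.skew x y, oL_neg_f, oL_ev1_subNeg D _ (hq (B u v)) hcomm, hop]
    have hT2 : oL xm (Fouter D B hR xl (xm + xg) (φ u v)) (B x y)
        = -(oL xg (Fouter D B hR xl (xm + xg) (φ u v)) (B y x)) := by
      rw [hR.skew x y, oL_neg_f, oL_ev1_subNeg D _ (hq (φ u v)) hcomm, hop]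
    rw [hT1, hT2]
    abel

end ConfBider
end

section
/- Let f(∂,λ) ∈ C[∂,λ] be a polynomial in two variables satisfying the identity (∂ + μ + γ + 2λ)·f(-μ-γ, μ) = (μ - γ)·f(∂ + μ + γ, λ) in the polynomial ring C[∂, λ, μ, γ]. Then there exists a constant a ∈ C such that f(∂,λ) = a(∂ + 2λ). -/
open MvPolynomial

/-- The variables `∂, λ, μ, γ` of `ℂ[∂,λ,μ,γ]`. -/
local notation "pd" => (X 0 : MvPolynomial (Fin 4) ℂ)
local notation "pl" => (X 1 : MvPolynomial (Fin 4) ℂ)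
local notation "pm" => (X 2 : MvPolynomial (Fin 4) ℂ)
local notation "pg" => (X 3 : MvPolynomial (Fin 4) ℂ)

theorem MvPolynomial.aeval_algebraMap_comp {R A σ : Type*} [CommSemiring R] [CommSemiring A]
    [Algebra R A] (v : σ → R) (p : MvPolynomial σ R) :
    aeval (algebraMap R A ∘ v) p = algebraMap R A (eval v p) :=
  (comp_aeval_apply v (Algebra.ofId R A) p).symm

/-- if `f(∂,λ) ∈ ℂ[∂,λ]` satisfies
`(∂+μ+γ+2λ)·f(-μ-γ,μ) = (μ-γ)·f(∂+μ+γ,λ)` in `ℂ[∂,λ,μ,γ]`, then `f = a(∂+2λ)`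
for some constant `a ∈ ℂ`. -/
theorem stmt8 (f : MvPolynomial (Fin 2) ℂ)
    (h : (pd + pm + pg + 2 * pl) * aeval ![-pm - pg, pm] f
        = (pm - pg) * aeval ![pd + pm + pg, pl] f) :
    ∃ a : ℂ, f = C a * (X 0 + 2 * X 1) := by
  -- `∂ ↦ x + 1, λ ↦ 0, μ ↦ y, γ ↦ -x - y` turns `f(-μ-γ, μ)` into `f(x, y)`, `f(∂+μ+γ, λ)`
  -- into the constant `f(1, 0)`, and the two linear factors into `1` and `x + 2y`.
  let φ : MvPolynomial (Fin 4) ℂ →ₐ[ℂ] MvPolynomial (Fin 2) ℂ :=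
    aeval ![X 0 + 1, 0, X 1, -(X 0 + X 1)]
  have hl : φ (aeval ![-pm - pg, pm] f) = f := by
    rw [comp_aeval_apply]
    convert aeval_X_left_apply f using 3
    funext i
    fin_cases i <;> simp [φ]
  have hr : φ (aeval ![pd + pm + pg, pl] f) = C (eval ![1, 0] f) := by
    rw [comp_aeval_apply, ← algebraMap_eq, ← aeval_algebraMap_comp]
    congr 2
    funext i
    fin_cases i <;> simp [φ]
  refine ⟨eval ![1, 0] f, ?_⟩
  calc f = φ (pd + pm + pg + 2 * pl) * f := by simp [φ]
    _ = φ (pm - pg) * C (eval ![1, 0] f) := by simpa only [map_mul, hl, hr] using congrArg φ h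
    _ = C (eval ![1, 0] f) * (X 0 + 2 * X 1) := by simp [φ]; ring
end

section
/- Let b ∈ C and let f(∂,λ), d(∂,λ) ∈ C[∂,λ] be polynomials satisfying (∂ + μ + γ + (1-b)λ)·f(-μ-γ, μ) = (μ - γ)·d(∂ + μ + γ, λ) as an identity in C[∂, λ, μ, γ]. Then there exists a constant a ∈ C such that f(∂,λ) = a(∂ + 2λ) and d(∂,λ) = a(∂ + (1-b)λ). -/
open MvPolynomial

local notation "pd" => (X 0 : MvPolynomial (Fin 4) ℂ)
local notation "pl" => (X 1 : MvPolynomial (Fin 4) ℂ)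
local notation "pm" => (X 2 : MvPolynomial (Fin 4) ℂ)
local notation "pg" => (X 3 : MvPolynomial (Fin 4) ℂ)

/-- Pushing an algebra hom inside a two-variable `aeval`. -/
lemma aeval_pair {A B : Type*} [CommRing A] [CommRing B] [Algebra ℂ A] [Algebra ℂ B]
    (φ : A →ₐ[ℂ] B) (u v : A) (p : MvPolynomial (Fin 2) ℂ) :
    φ (aeval ![u, v] p) = aeval ![φ u, φ v] p := by
  have hfun : (fun i => φ (![u, v] i)) = ![φ u, φ v] := by
    funext i; fin_cases i <;> simp
  rw [comp_aeval_apply, hfun]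

/-- `u - u'` divides the difference of substitutions in the first slot. -/
lemma sub_dvd_aeval_fst {A : Type*} [CommRing A] [Algebra ℂ A] (u u' v : A)
    (p : MvPolynomial (Fin 2) ℂ) :
    (u - u') ∣ aeval ![u, v] p - aeval ![u', v] p := by
  induction p using MvPolynomial.induction_on with
  | C a => simp
  | add p q hp hq =>
      simp only [map_add]
      have h : aeval ![u, v] p + aeval ![u, v] q - (aeval ![u', v] p + aeval ![u', v] q)
          = (aeval ![u, v] p - aeval ![u', v] p) + (aeval ![u, v] q - aeval ![u', v] q) := by ring
      rw [h]; exact dvd_add hp hq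
  | mul_X p i hp =>
      fin_cases i <;> simp only [map_mul, aeval_X, Matrix.cons_val_zero, Matrix.cons_val_one,
        Matrix.head_cons, Fin.isValue, Fin.mk_one, Fin.zero_eta]
      · have h : aeval ![u, v] p * u - aeval ![u', v] p * u'
            = (aeval ![u, v] p - aeval ![u', v] p) * u + aeval ![u', v] p * (u - u') := by ring
        rw [h]; exact dvd_add (hp.mul_right _) (Dvd.dvd.mul_left dvd_rfl _)
      · have h : aeval ![u, v] p * v - aeval ![u', v] p * v
            = (aeval ![u, v] p - aeval ![u', v] p) * v := by ring
        rw [h]; exact hp.mul_right _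

/-- If `p(w, X 1) = 0` then `X 0 - w` divides `p`. -/
lemma lin_dvd (w : MvPolynomial (Fin 2) ℂ) (p : MvPolynomial (Fin 2) ℂ)
    (h : aeval ![w, X 1] p = 0) : ∃ q, p = (X 0 - w) * q := by
  have h0 : aeval ![(X 0 : MvPolynomial (Fin 2) ℂ), X 1] p = p := by
    have he : ![(X 0 : MvPolynomial (Fin 2) ℂ), X 1] = X := by
      funext i; fin_cases i <;> simp
    rw [he, aeval_X_left_apply]
  have hd := sub_dvd_aeval_fst (X 0) w (X 1 : MvPolynomial (Fin 2) ℂ) p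
  rw [h0, h, sub_zero] at hd
  exact hd

set_option maxHeartbeats 1000000 in
/-- if `f, d ∈ ℂ[∂,λ]` satisfy
`(∂+μ+γ+(1-b)λ)·f(-μ-γ,μ) = (μ-γ)·d(∂+μ+γ,λ)` in `ℂ[∂,λ,μ,γ]`, then there is `a ∈ ℂ`
with `f = a(∂+2λ)` and `d = a(∂+(1-b)λ)`. -/
theorem stmt9 (b : ℂ) (f d : MvPolynomial (Fin 2) ℂ)
    (h : (pd + pm + pg + C (1 - b) * pl) * aeval ![-pm - pg, pm] f
        = (pm - pg) * aeval ![pd + pm + pg, pl] d) :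
    ∃ a : ℂ, f = C a * (X 0 + 2 * X 1) ∧ d = C a * (X 0 + C (1 - b) * X 1) := by
  -- Step A: substituting `μ := γ` gives `f(-2γ, γ) = 0`, hence `(X0 + 2 X1) ∣ f`.
  have h1 := congrArg (aeval ![pd, pl, pg, pg] : MvPolynomial (Fin 4) ℂ →ₐ[ℂ] _) h
  simp only [map_mul, map_add, map_sub, map_neg, aeval_X, aeval_C, aeval_pair,
    Matrix.cons_val_zero, Matrix.cons_val_one, Matrix.head_cons, Matrix.cons_val_two,
    Matrix.cons_val_three, Matrix.tail_cons, algebraMap_eq, sub_self, zero_mul] at h1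
  have hfac1 : (pd + pg + pg + (C 1 - C b) * pl) ≠ 0 := by
    intro hz
    have := congrArg (eval ![(1:ℂ), 0, 0, 0]) hz
    simp at this
  have hf4 : aeval ![-pg - pg, pg] f = 0 := by
    rcases mul_eq_zero.mp h1 with h' | h'
    · exact absurd h' hfac1
    · exact h'
  have h2 := congrArg (aeval ![(X 0 : MvPolynomial (Fin 2) ℂ), X 0, X 0, X 1] :
      MvPolynomial (Fin 4) ℂ →ₐ[ℂ] _) hf4
  simp only [map_mul, map_add, map_sub, map_neg, map_zero, aeval_X, aeval_pair,
    Matrix.cons_val_zero, Matrix.cons_val_one, Matrix.head_cons, Matrix.cons_val_two,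
    Matrix.cons_val_three, Matrix.tail_cons] at h2
  obtain ⟨q, hq⟩ := lin_dvd _ f h2
  -- Step B: substituting `∂ := -μ-γ-(1-b)λ` gives `d(-(1-b)λ, λ) = 0`.
  have h3 := congrArg (aeval ![-pm - pg - C (1 - b) * pl, pl, pm, pg] :
      MvPolynomial (Fin 4) ℂ →ₐ[ℂ] _) h
  simp only [map_mul, map_add, map_sub, map_neg, aeval_X, aeval_C, aeval_pair,
    Matrix.cons_val_zero, Matrix.cons_val_one, Matrix.head_cons, Matrix.cons_val_two,
    Matrix.cons_val_three, Matrix.tail_cons, algebraMap_eq] at h3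
  have hm1 : ![-pm - pg - (C 1 - C b) * pl + pm + pg, pl]
      = ![-((C 1 - C b) * pl), pl] := by
    funext i; fin_cases i
    · show -pm - pg - (C 1 - C b) * pl + pm + pg = -((C 1 - C b) * pl); ring
    · rfl
  have hz1 : (-pm - pg - (C 1 - C b) * pl + pm + pg + (C 1 - C b) * pl) = 0 := by ring
  rw [hm1, hz1, zero_mul] at h3
  have hfac2 : (pm - pg) ≠ 0 := by
    intro hz
    have := congrArg (eval ![(0:ℂ), 0, 1, 0]) hz
    simp at this
  have hd4 : aeval ![-((C 1 - C b) * pl), pl] d = 0 := by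
    rcases mul_eq_zero.mp h3.symm with h' | h'
    · exact absurd h' hfac2
    · exact h'
  have h4 := congrArg (aeval ![(X 0 : MvPolynomial (Fin 2) ℂ), X 1, X 0, X 0] :
      MvPolynomial (Fin 4) ℂ →ₐ[ℂ] _) hd4
  simp only [map_mul, map_add, map_sub, map_neg, map_zero, aeval_X, aeval_C, aeval_pair,
    Matrix.cons_val_zero, Matrix.cons_val_one, Matrix.head_cons, Matrix.cons_val_two,
    Matrix.cons_val_three, Matrix.tail_cons, algebraMap_eq] at h4
  obtain ⟨r, hr⟩ := lin_dvd _ d h4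
  -- Step C: substitute the factorizations back and cancel the common factors.
  rw [hq, hr] at h
  simp only [map_mul, map_add, map_sub, map_neg, aeval_X, aeval_C, aeval_pair,
    Matrix.cons_val_zero, Matrix.cons_val_one, Matrix.head_cons, algebraMap_eq] at h
  set Q := aeval ![-pm - pg, pm] q with hQ
  set R := aeval ![pd + pm + pg, pl] r with hR
  have hfac0 : (pm - pg) * (pd + pm + pg + (C 1 - C b) * pl) ≠ 0 := by
    refine mul_ne_zero hfac2 ?_
    intro hz
    have := congrArg (eval ![(1:ℂ), 0, 0, 0]) hz
    simp at this
  have hQR : Q = R := mul_left_cancel₀ hfac0 (by linear_combination h)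
  -- Step D: conclude that `q` and `r` are the same constant.
  have h5 := congrArg (aeval ![(X 0 : MvPolynomial (Fin 2) ℂ), X 1, 0, 0] :
      MvPolynomial (Fin 4) ℂ →ₐ[ℂ] _) hQR
  rw [hQ, hR, aeval_pair, aeval_pair] at h5
  simp only [map_mul, map_add, map_sub, map_neg, map_zero, aeval_X,
    Matrix.cons_val_zero, Matrix.cons_val_one, Matrix.head_cons, Matrix.cons_val_two,
    Matrix.cons_val_three, Matrix.tail_cons, add_zero, neg_zero, sub_zero, zero_sub] at h5
  have hXX : ![(X 0 : MvPolynomial (Fin 2) ℂ), X 1] = X := by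
    funext i; fin_cases i <;> simp
  rw [hXX, aeval_X_left_apply] at h5
  have h00 : ![(0 : MvPolynomial (Fin 2) ℂ), 0] = (fun _ => 0) := by
    funext i; fin_cases i <;> rfl
  have h6 := congrArg (aeval ![(0 : MvPolynomial (Fin 2) ℂ), 0, X 1, -X 0 - X 1] :
      MvPolynomial (Fin 4) ℂ →ₐ[ℂ] _) hQR
  rw [hQ, hR, aeval_pair, aeval_pair] at h6
  simp only [map_mul, map_add, map_sub, map_neg, map_zero, aeval_X,
    Matrix.cons_val_zero, Matrix.cons_val_one, Matrix.head_cons, Matrix.cons_val_two,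
    Matrix.cons_val_three, Matrix.tail_cons, zero_add, neg_zero, sub_zero, zero_sub] at h6
  have hm2 : ![-X 1 - (-X 0 - X 1), (X 1 : MvPolynomial (Fin 2) ℂ)] = X := by
    funext i; fin_cases i
    · show -X 1 - (-X 0 - X 1) = X 0; ring
    · rfl
  have hm3 : ![X 1 + (-X 0 - X 1), (0 : MvPolynomial (Fin 2) ℂ)] = ![-X 0, 0] := by
    funext i; fin_cases i
    · show X 1 + (-X 0 - X 1) = -X 0; ring
    · rfl
  rw [hm2, hm3, aeval_X_left_apply] at h6
  have hqc : q = aeval ![(0 : MvPolynomial (Fin 2) ℂ), 0] q := by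
    conv_lhs => rw [h6, ← h5, aeval_pair]
    simp
  rw [h00, aeval_zero', algebraMap_eq] at hqc
  have hrc : r = C (constantCoeff q) := by rw [← h5, h00, aeval_zero', algebraMap_eq]
  refine ⟨constantCoeff q, ?_, ?_⟩
  · rw [hq, ← hqc]; ring
  · rw [hr, hrc, map_sub]; ring
end

section
/- Let b ∈ C with b ≠ -1, and let g(∂,λ) ∈ C[∂,λ] satisfy -(∂ + μ + γ + 2λ)(b∂ + (b-1)(μ+γ))·g(-μ-γ, μ) = (μ - γ)(∂ + (1-b)(μ+γ))·g(∂ + μ + γ, λ) as an identity in C[∂, λ, μ, γ]. Then g = 0. -/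
open MvPolynomial

local notation "pd" => (X 0 : MvPolynomial (Fin 4) ℂ)
local notation "pl" => (X 1 : MvPolynomial (Fin 4) ℂ)
local notation "pm" => (X 2 : MvPolynomial (Fin 4) ℂ)
local notation "pg" => (X 3 : MvPolynomial (Fin 4) ℂ)

/-- if `b ≠ -1` and `g ∈ ℂ[∂,λ]` satisfies
`-(∂+μ+γ+2λ)(b∂+(b-1)(μ+γ))·g(-μ-γ,μ) = (μ-γ)(∂+(1-b)(μ+γ))·g(∂+μ+γ,λ)`
in `ℂ[∂,λ,μ,γ]`, then `g = 0`. -/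
theorem stmt10 (b : ℂ) (hb : b ≠ -1) (g : MvPolynomial (Fin 2) ℂ)
    (h : -((pd + pm + pg + 2 * pl) * (C b * pd + C (b - 1) * (pm + pg)))
          * aeval ![-pm - pg, pm] g
        = (pm - pg) * (pd + C (1 - b) * (pm + pg)) * aeval ![pd + pm + pg, pl] g) :
    g = 0 := by
  have key : ∀ d l m : ℂ, 2 * m * d * eval ![d, l] g
      = -b * d * (d + 2 * l) * eval ![(0:ℂ), m] g := by
    intro d l m
    have h2 := congrArg (MvPolynomial.aeval ![d, l, m, -m] : MvPolynomial (Fin 4) ℂ →ₐ[ℂ] ℂ) h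
    simp only [map_mul, map_add, map_sub, map_neg, map_ofNat, comp_aeval_apply,
      aeval_X, aeval_C, Matrix.cons_val_zero, Matrix.cons_val_one, Matrix.head_cons,
      Matrix.cons_val_two, Matrix.tail_cons, Matrix.cons_val_three, Algebra.algebraMap_self, RingHom.id_apply] at h2
    have e1 : (fun i => (MvPolynomial.aeval ![d, l, m, -m]) (![-pm - pg, pm] i)) = ![(0:ℂ), m] := by
      funext i; fin_cases i <;> simp
    have e2 : (fun i => (MvPolynomial.aeval ![d, l, m, -m]) (![pd + pm + pg, pl] i)) = ![d, l] := by
      funext i; fin_cases i <;> simp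
    rw [e1, e2] at h2
    have r1 : (MvPolynomial.aeval ![(0:ℂ), m]) g = eval ![(0:ℂ), m] g := rfl
    have r2 : (MvPolynomial.aeval ![d, l]) g = eval ![d, l] g := rfl
    rw [r1, r2] at h2
    linear_combination -h2
  set a := eval ![(0:ℂ), 1] g with ha
  have P0 : (X 0 : MvPolynomial (Fin 2) ℂ) * (C 2 * g + C (a*b) * (X 0 + C 2 * X 1)) = 0 := by
    apply MvPolynomial.funext
    intro x
    have hx : ![x 0, x 1] = x := by funext i; fin_cases i <;> rfl
    have hk := key (x 0) (x 1) 1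
    rw [hx] at hk
    simp only [map_mul, map_add, map_ofNat, eval_X, eval_C, map_zero, ha] at hk ⊢
    linear_combination hk
  rcases mul_eq_zero.mp P0 with h0 | hF
  · exact absurd h0 (MvPolynomial.X_ne_zero 0)
  have ha0 : a = 0 := by
    have h3 := congrArg (eval ![(0:ℂ), 1]) hF
    simp only [map_mul, map_add, map_ofNat, eval_X, eval_C, map_zero,
      Matrix.cons_val_zero, Matrix.cons_val_one, Matrix.head_cons] at h3
    have : a * (2 + 2*b) = 0 := by linear_combination h3
    rcases mul_eq_zero.mp this with h4 | h4
    · exact h4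
    · exact absurd (by linear_combination h4/2) hb
  rw [ha0] at hF
  simp only [zero_mul, map_zero, add_zero] at hF
  rcases mul_eq_zero.mp hF with h5 | h5
  · exact absurd (MvPolynomial.C_injective _ _ (h5.trans (map_zero C).symm)) two_ne_zero
  · exact h5
end

section
/- Let b = -1 and let g(∂,λ) ∈ C[∂,λ] satisfy -(∂ + μ + γ + 2λ)(-∂ - 2(μ+γ))·g(-μ-γ, μ) = (μ - γ)(∂ + 2(μ+γ))·g(∂ + μ + γ, λ) as an identity in C[∂, λ, μ, γ]. Then there exists a constant c ∈ C such that g(∂,λ) = c(∂ + 2λ). -/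
/-!
Specialise `μ = 1`, `γ = 0` and shift `∂ ↦ ∂ - 1`. The left side becomes
`(∂ + 1)(∂ + 2λ) · g(-1, 1)` and the right side `(∂ + 1) · g(∂, λ)`; cancelling `∂ + 1`
gives `g = g(-1, 1) · (∂ + 2λ)`.
-/

open MvPolynomial

local notation "pd" => (X 0 : MvPolynomial (Fin 4) ℂ)
local notation "pl" => (X 1 : MvPolynomial (Fin 4) ℂ)
local notation "pm" => (X 2 : MvPolynomial (Fin 4) ℂ)
local notation "pg" => (X 3 : MvPolynomial (Fin 4) ℂ)

namespace MvPolynomial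

variable {σ τ R : Type*} [CommRing R]

theorem aeval_C_comp (x : σ → R) (p : MvPolynomial σ R) :
    aeval (fun i => (C (x i) : MvPolynomial τ R)) p = C (eval x p) := by
  induction p using MvPolynomial.induction_on with
  | C a => rw [aeval_C, eval_C, algebraMap_eq]
  | add p q hp hq => rw [map_add, map_add, hp, hq, C_add]
  | mul_X p i hp => rw [map_mul, map_mul, hp, aeval_X, eval_X, C_mul]

theorem X_add_C_ne_zero [Nontrivial R] (i : σ) (a : R) : (X i + C a : MvPolynomial σ R) ≠ 0 := by
  intro h
  simpa using congrArg (eval fun _ => 1 - a) h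

end MvPolynomial

section Specialization

variable {R : Type*} [CommRing R]

/-- `∂ ↦ ∂ - 1, λ ↦ λ, μ ↦ 1, γ ↦ 0`. -/
noncomputable abbrev shiftSpecialization : MvPolynomial (Fin 4) R →ₐ[R] MvPolynomial (Fin 2) R :=
  aeval ![X 0 - 1, X 1, 1, 0]

theorem shiftSpecialization_aeval_shift (g : MvPolynomial (Fin 2) R) :
    shiftSpecialization (aeval ![X 0 + X 2 + X 3, X 1] g) = g := by
  have hX : (fun i => shiftSpecialization (![X 0 + X 2 + X 3, X 1] i)) =
      (X : Fin 2 → MvPolynomial (Fin 2) R) := by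
    funext i
    fin_cases i <;> simp
  rw [comp_aeval_apply, hX, aeval_X_left_apply]

theorem shiftSpecialization_aeval_const (g : MvPolynomial (Fin 2) R) :
    shiftSpecialization (aeval ![-X 2 - X 3, X 2] g) = C (eval ![-1, 1] g) := by
  have hC : (fun i => shiftSpecialization (![-X 2 - X 3, X 2] i)) =
      fun i => C (![-1, 1] i : R) := by
    funext i
    fin_cases i <;> simp
  rw [comp_aeval_apply, hC, aeval_C_comp]

end Specialization

/-- the case `b = -1`: if `g ∈ ℂ[∂,λ]` satisfies
`-(∂+μ+γ+2λ)(-∂-2(μ+γ))·g(-μ-γ,μ) = (μ-γ)(∂+2(μ+γ))·g(∂+μ+γ,λ)` in `ℂ[∂,λ,μ,γ]`,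
then `g = c(∂+2λ)` for some constant `c ∈ ℂ`. -/
theorem stmt11 (g : MvPolynomial (Fin 2) ℂ)
    (h : -((pd + pm + pg + 2 * pl) * (-pd - 2 * (pm + pg))) * aeval ![-pm - pg, pm] g
        = (pm - pg) * (pd + 2 * (pm + pg)) * aeval ![pd + pm + pg, pl] g) :
    ∃ c : ℂ, g = C c * (X 0 + 2 * X 1) := by
  refine ⟨eval ![-1, 1] g, ?_⟩
  have hs := congrArg shiftSpecialization h
  simp only [map_mul, map_neg, map_sub, map_add, map_ofNat, shiftSpecialization_aeval_shift,
    shiftSpecialization_aeval_const, aeval_X, Matrix.cons_val] at hs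
  apply mul_left_cancel₀ (C_1 (σ := Fin 2) (R := ℂ) ▸ X_add_C_ne_zero 0 1)
  linear_combination -hs
end

section
/- Every conformal biderivation of the Virasoro Lie conformal algebra Vir = C[∂]L is inner: if φ is a conformal biderivation of Vir, then there exists t ∈ C such that φ_λ(x,y) = t·[x_λ y] for all x, y ∈ Vir. -/
/- Write `F = φ_λ(L, L) ∈ ℂ[∂][λ]`. Setting `μ = γ = 0` in the Leibniz rule for `(L, L, L)` gives
`(∂+λ) F = (∂+2λ) F(-λ, λ) + ∂ F`, i.e. `λ F = (∂+2λ) F(-λ, λ)`; at `λ = 0` this shows that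
`λ` divides `F(-λ, λ)`, hence `F = (∂+2λ) h(λ)`. Skew-symmetry `F(∂, λ) = -F(∂, -∂-λ)` then
forces `h(λ) = h(-∂-λ)`, so `h(-∂) = h(0)` and `h` is a constant `t`. Finally `φ` and `t[· _λ ·]`
are conformal bilinear maps agreeing on `(L, L)`, and `L` generates `Vir` as a `ℂ[∂]`-module. -/

/- Framework: a Lie conformal algebra over ℂ is a ℂ[∂]-module `R` (given by a ℂ-module
with a ℂ-linear operator `D` for the action of `∂`) with a λ-bracket `B : R → R → R[λ]`.
We model `R[λ]` as `ℕ →₀ R` (coefficient of `λ^n` at index `n`) and `R[λ,μ,γ]` as an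
iterated Finsupp.  Substitutions of the bracket variable are implemented by evaluating
the polynomial at a commuting operator (e.g. multiplication by `λ`, by `λ+μ`, or by
`-∂-λ`), and brackets/biderivations are extended to polynomial-valued arguments by
ℂ[λ,μ,γ]-bilinearity. -/

namespace ConfBider

variable {R : Type} [AddCommGroup R] [Module ℂ R]

/-- Coefficient finsupp of a polynomial. -/
noncomputable def toF {S : Type} [Semiring S] (p : Polynomial S) : ℕ →₀ S :=
  Finsupp.onFinset p.support (fun n => p.coeff n) (fun n h => Polynomial.mem_support_iff.mpr h)

/-- The Virasoro conformal algebra: `Vir = ℂ[∂]L`, identified with `ℂ[∂]` via `p(∂)L ↦ p`. -/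
abbrev VirR : Type := Polynomial ℂ

/-- The action of `∂` on `Vir` (multiplication by the variable). -/
noncomputable def DVir : VirR →ₗ[ℂ] VirR := LinearMap.mulLeft ℂ (Polynomial.X : Polynomial ℂ)

/-- `ℂ → ℂ[∂][λ]` (constants). -/
noncomputable def cc : ℂ →+* Polynomial (Polynomial ℂ) := Polynomial.C.comp Polynomial.C

/-- `∂` inside `ℂ[∂][λ]`. -/
noncomputable def vpd : Polynomial (Polynomial ℂ) := Polynomial.C Polynomial.X

/-- `λ` inside `ℂ[∂][λ]`. -/
noncomputable def vpl : Polynomial (Polynomial ℂ) := Polynomial.X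

/-- The λ-bracket of `Vir`, determined by `[L_λ L] = (∂+2λ)L` and conformal
sesquilinearity: `[p(∂)L _λ q(∂)L] = p(-λ) q(∂+λ) (∂+2λ) L`. -/
noncomputable def BVir (p q : VirR) : Pol1 VirR :=
  toF ((p.eval₂ cc (-vpl)) * (q.eval₂ cc (vpd + vpl)) * (vpd + 2 * vpl))

open Polynomial

section Coefficients

variable {S : Type} [Semiring S]

noncomputable def toP : (ℕ →₀ S) ≃+ S[X] where
  toFun g := ⟨AddMonoidAlgebra.ofCoeff g⟩
  invFun := toF
  left_inv g := by ext; rfl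
  right_inv p := by ext; rfl
  map_add' _ _ := rfl

@[simp] lemma coeff_toP (g : ℕ →₀ S) (n : ℕ) : (toP g).coeff n = g n := rfl

lemma toP_toF (p : S[X]) : toP (toF p) = p := toP.apply_symm_apply p

lemma sum_toP {N : Type} [AddCommMonoid N] (g : ℕ →₀ S) (k : ℕ → S → N) :
    (toP g).sum k = g.sum k := rfl

@[simp] lemma toP_single (n : ℕ) (r : S) : toP (Finsupp.single n r) = monomial n r := by
  ext m; simp [coeff_monomial, Finsupp.single_apply]

lemma toP_mapDomain_succ (g : ℕ →₀ S) : toP (g.mapDomain (· + 1)) = X * toP g := by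
  ext m
  cases m with
  | zero => simp [Finsupp.mapDomain_of_notMem_range, mul_coeff_zero]
  | succ n => simp [Finsupp.mapDomain_apply (add_left_injective 1), coeff_X_mul]

end Coefficients

section PolynomialModel

variable {S : Type} [CommRing S]

lemma toP_shift1 (g : Pol1 S) : toP (shift1 g) = X * toP g := toP_mapDomain_succ g

lemma toP_iterate {e : Pol1 S → Pol1 S} {u : S[X]} (he : ∀ z, toP (e z) = u * toP z)
    (n : ℕ) (z : Pol1 S) : toP (e^[n] z) = u ^ n * toP z := by
  induction n generalizing z with
  | zero => simp
  | succ n ih => rw [Function.iterate_succ_apply, ih, he, pow_succ, mul_assoc]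

lemma toP_ev1 {e : Pol1 S → Pol1 S} {u : S[X]} (he : ∀ z, toP (e z) = u * toP z)
    (g : Pol1 S) : toP (ev1 g e) = (toP g).eval₂ C u := by
  rw [ev1, map_finsuppSum, eval₂_eq_sum, sum_toP]
  refine Finsupp.sum_congr fun n _ => ?_
  rw [toP_iterate he, toP_single, monomial_zero_left, mul_comm]

end PolynomialModel

lemma toP_D1 (g : Pol1 VirR) : toP (D1 DVir g) = C X * toP g := by
  ext n; simp [D1, DVir, coeff_C_mul]

lemma toP_subNeg (g : Pol1 VirR) : toP (subNeg DVir g) = (-C (X : VirR) - X) * toP g := by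
  rw [subNeg.eq_1, map_sub, map_neg, toP_D1, toP_shift1]
  ring

lemma toP_smul (c : ℂ) (g : Pol1 VirR) : toP (c • g) = cc c * toP g := by
  ext n; simp [cc, coeff_C_mul, smul_eq_C_mul]

lemma toP_BVir (p q : VirR) :
    toP (BVir p q) = p.eval₂ cc (-X) * q.eval₂ cc (C X + X) * (C X + 2 * X) :=
  toP_toF _

lemma eval_eval₂_cc (r : VirR) (v : VirR[X]) (a : VirR) :
    (r.eval₂ cc v).eval a = r.eval₂ C (v.eval a) := by
  rw [← coe_evalRingHom, hom_eval₂]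
  congr 1
  ext; simp [cc]

lemma Finsupp.sum_zero_pow_mul {M T : Type} [AddCommMonoid M] [Semiring T] (g : ℕ →₀ M)
    (k : M → T) (hk : k 0 = 0) : g.sum (fun n r => 0 ^ n * k r) = k (g 0) := by
  rw [Finsupp.sum_eq_single 0 (fun n _ hn => by rw [zero_pow hn, zero_mul])
    (fun _ => by rw [hk, mul_zero]), pow_zero, one_mul]

lemma ev_zero {M : Type} [AddCommGroup M] (e : Pol3 M → Pol3 M) : ev (0 : Pol1 M) e = 0 :=
  Finsupp.sum_zero_index

section EvalMuGammaZero

variable {S : Type} [CommRing S]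

noncomputable def evalMuGammaZero : Pol3 S →+ S[X] :=
  toP.toAddMonoidHom.comp
    (Finsupp.mapRange.addMonoidHom ((Finsupp.applyAddHom 0).comp (Finsupp.applyAddHom 0)))

@[simp] lemma coeff_evalMuGammaZero (w : Pol3 S) (a : ℕ) :
    (evalMuGammaZero w).coeff a = w a 0 0 := rfl

lemma evalMuGammaZero_iota3 (r : S) : evalMuGammaZero (iota3 r) = C r := by
  ext a
  rcases eq_or_ne a 0 with rfl | ha <;> simp [iota3, coeff_C, *]

lemma evalMuGammaZero_Xl (w : Pol3 S) : evalMuGammaZero (Xl w) = X * evalMuGammaZero w := by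
  ext a
  cases a with
  | zero => simp [Xl, Finsupp.mapDomain_of_notMem_range, mul_coeff_zero]
  | succ n => simp [Xl, Finsupp.mapDomain_apply (add_left_injective 1), coeff_X_mul]

-- Stated as multiplication by `0` so that it fits the hypothesis of `evalMuGammaZero_iterate`.
lemma evalMuGammaZero_Xm (w : Pol3 S) : evalMuGammaZero (Xm w) = 0 * evalMuGammaZero w := by
  ext a; simp [Xm, Finsupp.mapDomain_of_notMem_range]

lemma evalMuGammaZero_Xg (w : Pol3 S) : evalMuGammaZero (Xg w) = 0 * evalMuGammaZero w := by
  ext a; simp [Xg, Finsupp.mapDomain_of_notMem_range]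

lemma evalMuGammaZero_eLM (w : Pol3 S) : evalMuGammaZero (eLM w) = X * evalMuGammaZero w := by
  rw [eLM, map_add, evalMuGammaZero_Xl, evalMuGammaZero_Xm, zero_mul, add_zero]

lemma evalMuGammaZero_iterate {e : Pol3 S → Pol3 S} {u : S[X]}
    (he : ∀ z, evalMuGammaZero (e z) = u * evalMuGammaZero z) (n : ℕ) (z : Pol3 S) :
    evalMuGammaZero (e^[n] z) = u ^ n * evalMuGammaZero z := by
  induction n generalizing z with
  | zero => simp
  | succ n ih => rw [Function.iterate_succ_apply, ih, he, pow_succ, mul_assoc]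

lemma evalMuGammaZero_ev {e : Pol3 S → Pol3 S} {u : S[X]}
    (he : ∀ z, evalMuGammaZero (e z) = u * evalMuGammaZero z) (g : Pol1 S) :
    evalMuGammaZero (ev g e) = (toP g).eval₂ C u := by
  rw [ev, map_finsuppSum, eval₂_eq_sum, sum_toP]
  refine Finsupp.sum_congr fun n _ => ?_
  rw [evalMuGammaZero_iterate he, evalMuGammaZero_iota3, mul_comm]

lemma evalMuGammaZero_lift3 (F : S → Pol3 S) (hF : evalMuGammaZero (F 0) = 0) (w : Pol3 S) :
    evalMuGammaZero (lift3 F w)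
      = (evalMuGammaZero w).sum fun a r => X ^ a * evalMuGammaZero (F r) := by
  have hterm : ∀ a b c r, evalMuGammaZero (Xl^[a] (Xm^[b] (Xg^[c] (F r))))
      = X ^ a * (0 ^ b * (0 ^ c * evalMuGammaZero (F r))) := fun a b c r => by
    rw [evalMuGammaZero_iterate evalMuGammaZero_Xl, evalMuGammaZero_iterate evalMuGammaZero_Xm,
      evalMuGammaZero_iterate evalMuGammaZero_Xg]
  simp only [lift3, map_finsuppSum, hterm, ← Finsupp.mul_sum]
  simp only [Finsupp.sum_zero_pow_mul _ (fun r => evalMuGammaZero (F r)) hF,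
    Finsupp.sum_zero_pow_mul _ (fun v : ℕ →₀ S => evalMuGammaZero (F (v 0))) hF]
  rw [show evalMuGammaZero w = toP (w.mapRange (fun v => v 0 0) rfl) from rfl, sum_toP,
    Finsupp.sum_mapRange_index (by simp [hF])]

end EvalMuGammaZero

lemma shift1_smul (c : ℂ) (g : Pol1 R) : shift1 (c • g) = c • shift1 g :=
  Finsupp.mapDomain_smul c g

lemma D1_smul (D : R →ₗ[ℂ] R) (c : ℂ) (g : Pol1 R) : D1 D (c • g) = c • D1 D g := by
  ext n; simp [D1]

namespace IsConfBilinear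

variable {D : R →ₗ[ℂ] R} {φ : R → R → Pol1 R}

lemma zero_left (h : IsConfBilinear D φ) (y : R) : φ 0 y = 0 := by
  simpa using h.smul_left 0 0 y

lemma zero_right (h : IsConfBilinear D φ) (x : R) : φ x 0 = 0 := by
  simpa using h.smul_right 0 x 0

lemma smul (h : IsConfBilinear D φ) (t : ℂ) : IsConfBilinear D fun x y => t • φ x y where
  add_left x x' y := by rw [h.add_left, smul_add]
  add_right x y y' := by rw [h.add_right, smul_add]
  smul_left c x y := by rw [h.smul_left, smul_comm]
  smul_right c x y := by rw [h.smul_right, smul_comm]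
  d_left x y := by rw [h.d_left, shift1_smul, smul_neg]
  d_right x y := by rw [h.d_right, D1_smul, shift1_smul, smul_add]

end IsConfBilinear

lemma isConfBilinear_BVir : IsConfBilinear DVir BVir where
  add_left x x' y := toP.injective <| by
    rw [map_add, toP_BVir, toP_BVir, toP_BVir, eval₂_add]; ring
  add_right x y y' := toP.injective <| by
    rw [map_add, toP_BVir, toP_BVir, toP_BVir, eval₂_add]; ring
  smul_left c x y := toP.injective <| by
    rw [toP_smul, toP_BVir, toP_BVir, smul_eq_C_mul, eval₂_mul, eval₂_C]; ring
  smul_right c x y := toP.injective <| by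
    rw [toP_smul, toP_BVir, toP_BVir, smul_eq_C_mul, eval₂_mul, eval₂_C]; ring
  d_left x y := toP.injective <| by
    rw [map_neg, toP_shift1, toP_BVir, toP_BVir, DVir, LinearMap.mulLeft_apply, eval₂_mul,
      eval₂_X]
    ring
  d_right x y := toP.injective <| by
    rw [map_add, toP_D1, toP_shift1, toP_BVir, toP_BVir, DVir, LinearMap.mulLeft_apply,
      eval₂_mul, eval₂_X]
    ring

@[elab_as_elim]
lemma VirR.induction_on {motive : VirR → Prop} (p : VirR) (one : motive 1)
    (add : ∀ p q, motive p → motive q → motive (p + q))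
    (smul : ∀ (c : ℂ) p, motive p → motive (c • p))
    (d : ∀ p, motive p → motive (DVir p)) : motive p := by
  induction p using Polynomial.induction_on with
  | C a => simpa [smul_eq_C_mul] using smul a 1 one
  | add p q hp hq => exact add p q hp hq
  | monomial n a h =>
    convert d _ h using 1
    rw [DVir, LinearMap.mulLeft_apply]
    ring

lemma IsConfBilinear.eq_of_eq_one_one {φ ψ : VirR → VirR → Pol1 VirR}
    (hφ : IsConfBilinear DVir φ) (hψ : IsConfBilinear DVir ψ) (h : φ 1 1 = ψ 1 1) : φ = ψ := by
  have right : ∀ x, φ x 1 = ψ x 1 → ∀ y, φ x y = ψ x y := fun x hx y =>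
    VirR.induction_on y hx (fun p q hp hq => by rw [hφ.add_right, hψ.add_right, hp, hq])
      (fun c p hp => by rw [hφ.smul_right, hψ.smul_right, hp])
      (fun p hp => by rw [hφ.d_right, hψ.d_right, hp])
  have left : ∀ x, φ x 1 = ψ x 1 := fun x =>
    VirR.induction_on x h (fun p q hp hq => by rw [hφ.add_left, hψ.add_left, hp, hq])
      (fun c p hp => by rw [hφ.smul_left, hψ.smul_left, hp])
      (fun p hp => by rw [hφ.d_left, hψ.d_left, hp])
  funext x y
  exact right x (left x) y

section BivariatePolynomials

variable {K : Type} [CommRing K]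

lemma exists_eq_mul_map_C_of_X_mul_eq [IsDomain K] {F : K[X][X]} {g : K[X]}
    (h : X * F = (C X + 2 * X) * map C g) : ∃ q : K[X], F = (C X + 2 * X) * map C q := by
  have hg : g.coeff 0 = 0 := by
    simpa [eval_map, eval₂_at_zero] using congrArg (eval 0) h
  refine ⟨g.divX, mul_left_cancel₀ X_ne_zero ?_⟩
  rw [h]
  conv_lhs => rw [← X_mul_divX_add g]
  rw [hg, C_0, add_zero, Polynomial.map_mul, map_X]
  ring

lemma eq_C_of_map_C_eq_eval₂ {q : K[X]}
    (h : map C q = q.eval₂ (C.comp C) (-C (X : K[X]) - X)) : q = C (q.coeff 0) := by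
  have hcomp : q.comp (-X) = C (q.coeff 0) := by
    have h0 := congrArg (eval 0) h
    rw [eval_map, eval₂_at_zero, ← coe_evalRingHom, hom_eval₂] at h0
    have hC : (evalRingHom 0).comp (C.comp C) = (C : K →+* K[X]) := by ext; simp
    simpa [comp, hC] using h0.symm
  calc q = (q.comp (-X)).comp (-X) := by simp [comp_assoc]
    _ = C (q.coeff 0) := by rw [hcomp, C_comp]

lemma eval₂_eval₂RingHom_C_comp_C (F : K[X][X]) :
    F.eval₂ (eval₂RingHom (C.comp C) (-X)) X = map C (F.eval₂ (eval₂RingHom C (-X)) X) := by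
  rw [← coe_mapRingHom, hom_eval₂]
  congr 1
  · ext <;> simp
  · simp

lemma exists_eq_C_mul_of_X_mul_eq_of_eq_neg_eval₂ [IsDomain K] {F : K[X][X]}
    (h₁ : X * F = (C X + 2 * X) * map C (F.eval₂ (eval₂RingHom C (-X)) X))
    (h₂ : F = -F.eval₂ C (-C (X : K[X]) - X)) : ∃ t : K, F = C (C t) * (C X + 2 * X) := by
  obtain ⟨q, hq⟩ := exists_eq_mul_map_C_of_X_mul_eq h₁
  have hne : (C X + 2 * X : K[X][X]) ≠ 0 := fun h0 => by
    simpa using congrArg (coeff · 0) h0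
  have hq_const : q = C (q.coeff 0) := by
    refine eq_C_of_map_C_eq_eval₂ (mul_left_cancel₀ hne ?_)
    rw [hq] at h₂
    simp only [eval₂_mul, eval₂_map, eval₂_add, eval₂_C, eval₂_X, eval₂_ofNat] at h₂
    linear_combination h₂
  refine ⟨q.coeff 0, ?_⟩
  rw [hq]
  conv_lhs => rw [hq_const]
  rw [map_C]
  ring

end BivariatePolynomials

lemma sum_X_pow_mul_eq_mul_eval₂ {S T : Type} [Semiring S] [CommSemiring T] (p : S[X])
    (ψ : S →+* T[X]) (c : T[X]) : p.sum (fun n r => X ^ n * (ψ r * c)) = c * p.eval₂ ψ X := by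
  simp only [eval₂_eq_sum, Polynomial.sum, Finset.mul_sum]
  exact Finset.sum_congr rfl fun n _ => by ring

lemma IsConfBiderivation.X_mul_toP_one_one {φ : VirR → VirR → Pol1 VirR}
    (hφ : IsConfBiderivation DVir BVir φ) :
    X * toP (φ 1 1) = (C X + 2 * X) * map C ((toP (φ 1 1)).eval₂ (eval₂RingHom C (-X)) X) := by
  have hlhs : evalMuGammaZero (lift3 (fun r => ev (φ 1 r) Xl) (ev (BVir 1 1) Xm))
      = (C X + X) * toP (φ 1 1) := by
    have hB : (toP (BVir 1 1)).coeff 0 = DVir 1 := by simp [toP_BVir, DVir]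
    rw [evalMuGammaZero_lift3 _ (by rw [hφ.bilin.zero_right, ev_zero, map_zero]),
      evalMuGammaZero_ev evalMuGammaZero_Xm, eval₂_at_zero, hB,
      sum_C_index (by rw [hφ.bilin.zero_right, ev_zero, map_zero, mul_zero]), pow_zero, one_mul,
      evalMuGammaZero_ev evalMuGammaZero_Xl, eval₂_C_X, hφ.bilin.d_right, map_add, toP_D1,
      toP_shift1]
    ring
  have hmid : evalMuGammaZero (lift3 (fun r => ev (BVir r 1) eLM) (ev (φ 1 1) Xl))
      = (C X + 2 * X) * (toP (φ 1 1)).eval₂ (eval₂RingHom cc (-X)) X := by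
    rw [evalMuGammaZero_lift3 _ (by rw [isConfBilinear_BVir.zero_left, ev_zero, map_zero]),
      evalMuGammaZero_ev evalMuGammaZero_Xl, eval₂_C_X]
    simp only [evalMuGammaZero_ev evalMuGammaZero_eLM, eval₂_C_X, toP_BVir, eval₂_one, mul_one]
    exact sum_X_pow_mul_eq_mul_eval₂ _ (eval₂RingHom cc (-X)) _
  have hright : evalMuGammaZero (lift3 (fun r => ev (BVir 1 r) Xm) (ev (φ 1 1) Xl))
      = C X * toP (φ 1 1) := by
    have hB : ∀ r, (toP (BVir 1 r)).eval₂ C 0 = C r * C X := fun r => by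
      rw [eval₂_at_zero, coeff_zero_eq_eval_zero, toP_BVir]
      simp [eval_eval₂_cc]
    rw [evalMuGammaZero_lift3 _ (by rw [isConfBilinear_BVir.zero_right, ev_zero, map_zero]),
      evalMuGammaZero_ev evalMuGammaZero_Xl, eval₂_C_X]
    simp only [evalMuGammaZero_ev evalMuGammaZero_Xm, hB]
    rw [sum_X_pow_mul_eq_mul_eval₂, eval₂_C_X]
  have key := congrArg evalMuGammaZero (hφ.leibniz 1 1 1)
  rw [map_add, hlhs, hmid, hright] at key
  rw [cc, eval₂_eval₂RingHom_C_comp_C] at key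
  linear_combination key

lemma toP_eq_neg_eval₂_of_isSkew {φ : VirR → VirR → Pol1 VirR} (h : IsSkew DVir φ) (x : VirR) :
    toP (φ x x) = -(toP (φ x x)).eval₂ C (-C (X : VirR) - X) := by
  simpa [toP_ev1 toP_subNeg] using congrArg toP (h x x)

/-- every conformal biderivation of the Virasoro Lie conformal algebra
`Vir = ℂ[∂]L` is inner: `φ_λ(x,y) = t[x_λ y]` for some `t ∈ ℂ`. -/
theorem vir_biderivation_inner (φ : VirR → VirR → Pol1 VirR)
    (hφ : IsConfBiderivation DVir BVir φ) :
    ∃ t : ℂ, ∀ x y : VirR, φ x y = t • BVir x y := by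
  obtain ⟨t, ht⟩ := exists_eq_C_mul_of_X_mul_eq_of_eq_neg_eval₂ hφ.X_mul_toP_one_one
    (toP_eq_neg_eval₂_of_isSkew hφ.skew 1)
  have hbase : φ 1 1 = t • BVir 1 1 := toP.injective <| by
    rw [ht, toP_smul, toP_BVir, eval₂_one, eval₂_one, one_mul, one_mul]
    rfl
  refine ⟨t, fun x y => ?_⟩
  rw [hφ.bilin.eq_of_eq_one_one (isConfBilinear_BVir.smul t) hbase]

end ConfBider
end
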